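/- arXiv:2404.14781 — 11 statements merged into one kernel-verified Lean document; each statement's English description precedes it below -/
import Mathlib

section
/- Let P ⊆ ℚ^d be a plane (2-dimensional subspace) and Z an orthant in ℚ^d. Then there exists a set V ⊆ ℚ^d with |V| ≤ 2 such that P ∩ Z equals the cone generated by V (the set of nonnegative rational linear combinations of elements of V). -/
/-!
Let `C` be the cone cut out of a plane by finitely many inequalities `0 ≤ f i x` whose
equations `f i x = 0` have no common nonzero solution (for `P ∩ Z`, `f i x = t i * x i`).
Then `ℓ = ∑ i, f i` is positive on `C \ {0}`. If `C ≠ 0`, pick `0 ≠ u ∈ C` and `0 ≠ w ∈ ker ℓ`: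
every `x ∈ C` is `a • u + b • w` with `a ≥ 0`, and `a = 0` only for `x = 0`. Neither `w` nor `-w`
lies in `C`, so the line `u + 𝕜 • w` meets `C` in a segment, whose endpoints are given by a
minimum of finitely many ratios and so are rational. `C` is the cone over this segment.
-/

/-- The cone generated by a set `V ⊆ ℚ^d`: all finite nonnegative rational
linear combinations of elements of `V`. -/
def cone {d : ℕ} (V : Set (Fin d → ℚ)) : Set (Fin d → ℚ) :=
  {x | ∃ (k : ℕ) (lam : Fin k → ℚ) (c : Fin k → (Fin d → ℚ)),
    (∀ i, 0 ≤ lam i) ∧ (∀ i, c i ∈ V) ∧ x = ∑ i, lam i • c i}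

open Module Set PointedCone

section

variable {𝕜 E ι : Type*} [Field 𝕜] [AddCommGroup E] [Module 𝕜 E]

lemma exists_smul_add_smul_eq_of_finrank_eq_two (hE : finrank 𝕜 E = 2) {u w : E}
    (h : LinearIndependent 𝕜 ![u, w]) (x : E) : ∃ a b : 𝕜, a • u + b • w = x := by
  have hspan := h.span_eq_top_of_card_eq_finrank (by simp [hE])
  rw [Matrix.range_cons_cons_empty] at hspan
  exact Submodule.mem_span_pair.mp (hspan ▸ Submodule.mem_top)

lemma linearIndependent_pair_of_apply_ne_zero_of_mem_ker {ℓ : E →ₗ[𝕜] 𝕜} {u w : E}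
    (hu : ℓ u ≠ 0) (hw : w ∈ LinearMap.ker ℓ) (hw0 : w ≠ 0) : LinearIndependent 𝕜 ![u, w] :=
  LinearIndependent.pair_iff.mpr fun a b hab => by
    have ha : a = 0 := by simpa [hu, LinearMap.mem_ker.mp hw] using congr(ℓ $hab)
    subst ha
    exact ⟨rfl, by simpa [hw0] using hab⟩

variable [LinearOrder 𝕜] [IsStrictOrderedRing 𝕜]

lemma exists_isGreatest_setOf_forall_nonneg_add_mul [Finite ι] {α β : ι → 𝕜}
    (hα : ∀ i, 0 ≤ α i) (hβ : ∃ i, β i < 0) :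
    ∃ s, IsGreatest {r | ∀ i, 0 ≤ α i + r * β i} s := by
  obtain ⟨i₀, hi₀, hmin⟩ := exists_min_image {i | β i < 0} (fun i => α i / -β i)
    (toFinite _) hβ
  have hi₀' : 0 < -β i₀ := neg_pos.mpr hi₀
  refine ⟨α i₀ / -β i₀, fun j => ?_, fun r hr => ?_⟩
  · rcases le_or_gt 0 (β j) with hj | hj
    · exact add_nonneg (hα j) (mul_nonneg (div_nonneg (hα i₀) hi₀'.le) hj)
    · have := (le_div_iff₀ (neg_pos.mpr hj)).mp (hmin j hj)
      linarith
  · rw [le_div_iff₀ hi₀']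
    linarith [hr i₀]

lemma add_smul_mem_segment {a b r : 𝕜} (hr : r ∈ Icc a b) (x y : E) :
    x + r • y ∈ segment 𝕜 (x + a • y) (x + b • y) := by
  rw [← segment_eq_Icc (hr.1.trans hr.2)] at hr
  have := mem_image_of_mem (AffineMap.lineMap x (x + y) : 𝕜 →ᵃ[𝕜] E) hr
  rw [image_segment] at this
  simpa [AffineMap.lineMap_apply, add_comm] using this

variable (f : ι → E →ₗ[𝕜] 𝕜)

lemma mem_dual_range_iff {x : E} : x ∈ dual .id (range f) ↔ ∀ i, 0 ≤ f i x := by simp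

lemma sum_apply_nonneg_of_mem_dual [Fintype ι] {x : E} (hx : x ∈ dual .id (range f)) :
    0 ≤ (∑ i, f i) x := by
  simpa using Finset.sum_nonneg fun i _ => (mem_dual_range_iff f).mp hx i

lemma eq_zero_of_mem_dual_of_sum_apply_eq_zero [Fintype ι] (hf : ∀ x, (∀ i, f i x = 0) → x = 0)
    {x : E} (hx : x ∈ dual .id (range f)) (h : (∑ i, f i) x = 0) : x = 0 := by
  rw [LinearMap.sum_apply,
    Finset.sum_eq_zero_iff_of_nonneg fun i _ => (mem_dual_range_iff f).mp hx i] at h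
  exact hf x fun i => h i (Finset.mem_univ i)

lemma exists_apply_neg_of_sum_apply_eq_zero [Fintype ι] (hf : ∀ x, (∀ i, f i x = 0) → x = 0)
    {v : E} (hv : (∑ i, f i) v = 0) (hv0 : v ≠ 0) : ∃ i, f i v < 0 := by
  by_contra! h
  exact hv0 (eq_zero_of_mem_dual_of_sum_apply_eq_zero f hf ((mem_dual_range_iff f).mpr h) hv)

lemma exists_mem_dual_forall_add_smul_mem_segment [Finite ι] {u w : E}
    (hu : u ∈ dual .id (range f)) (hw : ∃ i, f i w < 0) (hw' : ∃ i, 0 < f i w) :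
    ∃ e₁ ∈ dual .id (range f), ∃ e₂ ∈ dual .id (range f), ∀ r : 𝕜,
      u + r • w ∈ dual .id (range f) → u + r • w ∈ segment 𝕜 e₁ e₂ := by
  simp only [mem_dual_range_iff, map_add, map_smul, smul_eq_mul] at hu ⊢
  obtain ⟨s, hs, hs_max⟩ := exists_isGreatest_setOf_forall_nonneg_add_mul hu hw
  obtain ⟨s', hs', hs'_max⟩ :=
    exists_isGreatest_setOf_forall_nonneg_add_mul (β := fun i => -f i w) hu (by simpa using hw')
  refine ⟨u + (-s') • w, fun i => by simpa using hs' i, u + s • w, fun i => by simpa using hs i,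
    fun r hr => add_smul_mem_segment ⟨?_, hs_max hr⟩ u w⟩
  have : -r ≤ s' := hs'_max fun i => by simpa using hr i
  linarith

theorem exists_dual_eq_hull_pair_of_finrank_eq_two [Finite ι] (hE : finrank 𝕜 E = 2)
    (hf : ∀ x, (∀ i, f i x = 0) → x = 0) :
    ∃ e₁ e₂ : E, dual .id (range f) = hull 𝕜 {e₁, e₂} := by
  have := Fintype.ofFinite ι
  have : FiniteDimensional 𝕜 E := .of_finrank_pos (by omega)
  set C := dual .id (range f)
  by_cases hC : ∃ u ∈ C, u ≠ 0
  swap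
  · push Not at hC
    refine ⟨0, 0, le_antisymm (fun x hx => ?_) (by simp)⟩
    rw [hC x hx]
    exact zero_mem _
  obtain ⟨u, hu, hu0⟩ := hC
  set ℓ := ∑ i, f i
  have hℓu : 0 < ℓ u := (sum_apply_nonneg_of_mem_dual f hu).lt_of_ne fun h =>
    hu0 (eq_zero_of_mem_dual_of_sum_apply_eq_zero f hf hu h.symm)
  obtain ⟨w, hw, hw0⟩ : ∃ w ∈ LinearMap.ker ℓ, w ≠ 0 :=
    (Submodule.ne_bot_iff _).mp (LinearMap.ker_ne_bot_of_finrank_lt (by simp [hE]))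
  obtain ⟨e₁, he₁, e₂, he₂, hseg⟩ := exists_mem_dual_forall_add_smul_mem_segment f hu
    (exists_apply_neg_of_sum_apply_eq_zero f hf hw hw0)
    (by simpa using exists_apply_neg_of_sum_apply_eq_zero f hf (neg_mem hw) (neg_ne_zero.mpr hw0))
  refine ⟨e₁, e₂, le_antisymm (fun x hx => ?_) (Submodule.span_le.mpr (pair_subset he₁ he₂))⟩
  obtain ⟨a, b, rfl⟩ := exists_smul_add_smul_eq_of_finrank_eq_two hE
    (linearIndependent_pair_of_apply_ne_zero_of_mem_ker hℓu.ne' hw hw0) x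
  have hℓx : ℓ (a • u + b • w) = a * ℓ u := by simp [LinearMap.mem_ker.mp hw]
  rcases (nonneg_of_mul_nonneg_left (hℓx ▸ sum_apply_nonneg_of_mem_dual f hx) hℓu).eq_or_lt
    with rfl | ha
  · rw [eq_zero_of_mem_dual_of_sum_apply_eq_zero f hf hx (by rw [hℓx, zero_mul])]
    exact zero_mem _
  have hx' : a • u + b • w = a • (u + (b / a) • w) := by
    rw [smul_add, smul_smul, mul_div_cancel₀ _ ha.ne']
  rw [hx'] at hx ⊢
  refine (hull 𝕜 _).smul_mem ha.le ((hull 𝕜 _).convex.segment_subset ?_ ?_ (hseg _ ?_))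
  · exact subset_hull (mem_insert _ _)
  · exact subset_hull (mem_insert_of_mem _ rfl)
  · exact (C.smul_mem_iff ha).mp hx

end

lemma cone_eq_hull {d : ℕ} (V : Set (Fin d → ℚ)) : cone V = hull ℚ V := by
  ext x
  rw [SetLike.mem_coe, Submodule.mem_span_set']
  constructor
  · rintro ⟨k, lam, c, hlam, hc, rfl⟩
    exact ⟨k, fun i => ⟨lam i, hlam i⟩, fun i => ⟨c i, hc i⟩, rfl⟩
  · rintro ⟨k, lam, c, rfl⟩
    exact ⟨k, fun i => lam i, fun i => c i, fun i => (lam i).2, fun i => (c i).2, rfl⟩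

/-- Every intersection of a plane (2-dimensional subspace) of `ℚ^d` with an
orthant is a cone generated by at most two vectors. -/
theorem stmt0 {d : ℕ} (P : Submodule ℚ (Fin d → ℚ)) (hP : Module.finrank ℚ P = 2)
    (t : Fin d → ℚ) (ht : ∀ i, t i = 1 ∨ t i = -1) :
    ∃ V : Set (Fin d → ℚ), V.Finite ∧ V.ncard ≤ 2 ∧
      {x : Fin d → ℚ | x ∈ P ∧ ∀ i, 0 ≤ x i * t i} = cone V := by
  have ht0 : ∀ i, t i ≠ 0 := fun i => by rcases ht i with h | h <;> simp [h]
  let f : Fin d → P →ₗ[ℚ] ℚ := fun i => t i • (LinearMap.proj i ∘ₗ P.subtype)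
  obtain ⟨e₁, e₂, he⟩ := exists_dual_eq_hull_pair_of_finrank_eq_two f hP fun x hx =>
    Subtype.ext (funext fun i => by simpa [f, ht0 i] using hx i)
  refine ⟨{(e₁ : Fin d → ℚ), (e₂ : Fin d → ℚ)}, toFinite _,
    (ncard_insert_le _ _).trans (by simp), ?_⟩
  have hmap : hull ℚ (Subtype.val '' {e₁, e₂}) = (hull ℚ {e₁, e₂}).map P.subtype :=
    (Submodule.map_span (P.subtype.restrictScalars {c : ℚ // 0 ≤ c}) _).symm
  rw [cone_eq_hull, ← image_pair, hmap, ← he]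
  ext x
  simp [f, mul_comm, and_comm]
end

section
/- Let P ⊆ ℚ^d be a vector space, Z an orthant in ℚ^d, and I ⊆ {1,…,d} a sign-reflecting projection for P with respect to Z (i.e., for all v ∈ P, if the projection v|_I lies in Z|_I then v ∈ Z). Then every vector v ∈ P ∩ Z is uniquely determined by its projection v|_I: for all v, v' ∈ P ∩ Z, v|_I = v'|_I implies v = v'. -/
/-- If `I` is a sign-reflecting projection for a vector space `P ⊆ ℚ^d` with
respect to an orthant `Z` (given by a sign vector `t`), then every vector of
`P ∩ Z` is uniquely determined by its projection onto the coordinates in `I`. -/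
theorem stmt1 {d : ℕ} (P : Submodule ℚ (Fin d → ℚ))
    (t : Fin d → ℚ) (ht : ∀ i, t i = 1 ∨ t i = -1)
    (I : Set (Fin d))
    (hSR : ∀ v ∈ P, (∃ z : Fin d → ℚ, (∀ i, 0 ≤ z i * t i) ∧ ∀ i ∈ I, v i = z i) →
      (∀ i, 0 ≤ v i * t i)) :
    ∀ v v' : Fin d → ℚ, v ∈ P → (∀ i, 0 ≤ v i * t i) →
      v' ∈ P → (∀ i, 0 ≤ v' i * t i) →
      (∀ i ∈ I, v i = v' i) → v = v' := by
  intro v v' hv _ hv' _ hI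
  have hw : v - v' ∈ P := P.sub_mem hv hv'
  have hw' : v' - v ∈ P := P.sub_mem hv' hv
  have h1 : ∀ i, 0 ≤ (v - v') i * t i := by
    refine hSR _ hw ⟨0, fun i => by simp, fun i hi => by simp [hI i hi]⟩
  have h2 : ∀ i, 0 ≤ (v' - v) i * t i := by
    refine hSR _ hw' ⟨0, fun i => by simp, fun i hi => by simp [hI i hi]⟩
  funext i
  have ht' : t i ≠ 0 := by rcases ht i with h | h <;> simp [h]
  have h1' := h1 i
  have h2' := h2 i
  simp only [Pi.sub_apply] at h1' h2'
  have : (v i - v' i) * t i = 0 := le_antisymm (by nlinarith) h1'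
  have := mul_eq_zero.mp this
  rcases this with h | h
  · linarith [sub_eq_zero.mp h]
  · exact absurd h ht'
end

section
/- Let d ≥ 2, let P ⊆ ℚ^d be a 2-dimensional subspace, and let Z be an orthant in ℚ^d such that P ∩ Z contains two linearly independent vectors. Then there exists a set I ⊆ {1,…,d} with |I| = 2 that is a sign-reflecting projection for P with respect to Z: for every v ∈ P, if v|_I ∈ Z|_I then v ∈ Z. -/
/-- For a plane `P ⊆ ℚ^d` and an orthant `Z` such that `P ∩ Z` contains two
linearly independent vectors, there is a sign-reflecting projection `I` for `P`
with respect to `Z` of size exactly `2`. -/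
theorem stmt2 {d : ℕ} (hd : 2 ≤ d) (P : Submodule ℚ (Fin d → ℚ))
    (hP : Module.finrank ℚ P = 2)
    (t : Fin d → ℚ) (ht : ∀ i, t i = 1 ∨ t i = -1)
    (hli : ∃ u v : Fin d → ℚ, u ∈ P ∧ (∀ i, 0 ≤ u i * t i) ∧
      v ∈ P ∧ (∀ i, 0 ≤ v i * t i) ∧ LinearIndependent ℚ ![u, v]) :
    ∃ I : Finset (Fin d), I.card = 2 ∧
      ∀ w ∈ P, (∃ z : Fin d → ℚ, (∀ i, 0 ≤ z i * t i) ∧ ∀ i ∈ I, w i = z i) →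
        ∀ i, 0 ≤ w i * t i := by
  classical
  obtain ⟨u, v, huP, hu, hvP, hv, hli⟩ := hli
  set U : Fin d → ℚ := fun k => u k * t k with hUdef
  set V : Fin d → ℚ := fun k => v k * t k with hVdef
  have hUnn : ∀ k, 0 ≤ U k := hu
  have hVnn : ∀ k, 0 ≤ V k := hv
  -- span {u,v} = P
  have hQP : Submodule.span ℚ ({u, v} : Set (Fin d → ℚ)) ≤ P := by
    rw [Submodule.span_le]
    intro x hx
    rcases hx with rfl | hx
    · exact huP
    · rw [Set.mem_singleton_iff] at hx; subst hx; exact hvP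
  have hrange : Set.range ![u, v] = ({u, v} : Set (Fin d → ℚ)) := by
    simp [Matrix.range_cons, Matrix.range_empty, Set.pair_comm]
  have hQrank : Module.finrank ℚ (Submodule.span ℚ ({u, v} : Set (Fin d → ℚ))) = 2 := by
    rw [← hrange, finrank_span_eq_card hli, Fintype.card_fin]
  have hQ : Submodule.span ℚ ({u, v} : Set (Fin d → ℚ)) = P :=
    Submodule.eq_of_le_of_finrank_eq hQP (by rw [hQrank, hP])
  have hw : ∀ w ∈ P, ∃ a b : ℚ, ∀ k, w k * t k = a * U k + b * V k := by
    intro w hwP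
    have hwQ : w ∈ Submodule.span ℚ ({u, v} : Set (Fin d → ℚ)) := by rw [hQ]; exact hwP
    obtain ⟨a, b, hab⟩ := Submodule.mem_span_pair.mp hwQ
    refine ⟨a, b, fun k => ?_⟩
    rw [← hab]
    simp [hUdef, hVdef]
    ring
  -- nonemptiness of the set of nonzero normals
  have hu0 : u ≠ 0 := by simpa using hli.ne_zero 0
  obtain ⟨k0, hk0⟩ : ∃ k, u k ≠ 0 := Function.ne_iff.mp hu0
  have ht0 : ∀ k, t k ≠ 0 := by
    intro k; rcases ht k with h | h <;> rw [h] <;> norm_num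
  have hk0' : 0 < U k0 :=
    (hUnn k0).lt_of_ne (Ne.symm (mul_ne_zero hk0 (ht0 k0)))
  set S : Finset (Fin d) := Finset.univ.filter (fun k => 0 < U k + V k) with hSdef
  have hk0S : k0 ∈ S := by
    simp only [hSdef, Finset.mem_filter, Finset.mem_univ, true_and]
    linarith [hVnn k0]
  set f : Fin d → ℚ := fun k => V k / (U k + V k) with hfdef
  obtain ⟨i, hiS, hmin⟩ := S.exists_min_image f ⟨k0, hk0S⟩
  obtain ⟨j, hjS, hmax⟩ := S.exists_max_image f ⟨k0, hk0S⟩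
  have hD : ∀ k ∈ S, 0 < U k + V k := by
    intro k hk
    simpa only [hSdef, Finset.mem_filter, Finset.mem_univ, true_and] using hk
  have hDi : 0 < U i + V i := hD i hiS
  have hDj : 0 < U j + V j := hD j hjS
  have hcross_min : ∀ k ∈ S, V i * U k ≤ U i * V k := by
    intro k hk
    have hDk := hD k hk
    have h := (div_le_div_iff₀ hDi hDk).mp (hmin k hk)
    nlinarith
  have hcross_max : ∀ k ∈ S, V k * U j ≤ U k * V j := by
    intro k hk
    have hDk := hD k hk
    have h := (div_le_div_iff₀ hDk hDj).mp (hmax k hk)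
    nlinarith
  -- key lemma
  have key : ∀ a b : ℚ, 0 ≤ a * U i + b * V i → 0 ≤ a * U j + b * V j →
      ∀ k, 0 ≤ a * U k + b * V k := by
    intro a b hA hB k
    by_cases hkS : k ∈ S
    · have h1 := hcross_min k hkS
      have h2 := hcross_max k hkS
      have hij := hcross_min j hjS
      rcases lt_or_eq_of_le hij with hC | hC
      · -- nondegenerate cone: n_k is a nonneg combination of n_i and n_j
        have e : (U i * V j - V i * U j) * (a * U k + b * V k)
            = (U i * V k - V i * U k) * (a * U j + b * V j)
              + (U k * V j - V k * U j) * (a * U i + b * V i) := by ring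
        nlinarith [mul_nonneg (by linarith : (0:ℚ) ≤ U i * V k - V i * U k) hB,
                   mul_nonneg (by linarith : (0:ℚ) ≤ U k * V j - V k * U j) hA]
      · -- degenerate: everything parallel to n_i
        have hpar : V i * U k = U i * V k := by
          refine le_antisymm h1 ?_
          rcases (hVnn j).lt_or_eq with hVj | hVj
          · have h3 : V i * (V k * U j) ≤ V i * (U k * V j) :=
              mul_le_mul_of_nonneg_left h2 (hVnn i)
            have e7 : V i * (V k * U j) = (U i * V k) * V j := by
              linear_combination V k * hC
            have h4 : (U i * V k) * V j ≤ (V i * U k) * V j := by linarith [h3, e7]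
            exact le_of_mul_le_mul_right h4 hVj
          · have hUj : 0 < U j := by linarith
            have hVi : V i = 0 := by
              have : V i * U j = 0 := by rw [hC, ← hVj, mul_zero]
              rcases mul_eq_zero.mp this with h | h
              · exact h
              · exact absurd h (ne_of_gt hUj)
            have hVk : V k = 0 := by
              have h5 : V k * U j ≤ 0 := by
                have h7 : U k * V j = 0 := by rw [← hVj, mul_zero]
                linarith [h2]
              have h6 : 0 ≤ V k * U j := mul_nonneg (hVnn k) (le_of_lt hUj)
              have := le_antisymm h5 h6
              rcases mul_eq_zero.mp this with h | h
              · exact h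
              · exact absurd h (ne_of_gt hUj)
            rw [hVi, hVk]; simp
        rcases (hUnn i).lt_or_eq with hUi | hUi
        · have e : U i * (a * U k + b * V k) = U k * (a * U i + b * V i) := by
            linear_combination (-b) * hpar
          have h5 : 0 ≤ U i * (a * U k + b * V k) := by
            rw [e]; exact mul_nonneg (hUnn k) hA
          nlinarith [h5, hUi]
        · have hVi : 0 < V i := by
            have := hDi; rw [← hUi] at this; linarith
          have h6 : V i * U k = 0 := by rw [hpar, ← hUi, zero_mul]
          have hUk : U k = 0 := by
            rcases mul_eq_zero.mp h6 with h | h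
            · exact absurd h (ne_of_gt hVi)
            · exact h
          have hb : 0 ≤ b := by rw [← hUi] at hA; nlinarith [hA, hVi]
          have : 0 ≤ b * V k := mul_nonneg hb (hVnn k)
          rw [hUk]; nlinarith [this]
    · have hDk : ¬ 0 < U k + V k := by
        simpa only [hSdef, Finset.mem_filter, Finset.mem_univ, true_and] using hkS
      have h1 : U k = 0 := le_antisymm (by push_neg at hDk; linarith [hVnn k]) (hUnn k)
      have h2 : V k = 0 := le_antisymm (by push_neg at hDk; linarith [hUnn k]) (hVnn k)
      rw [h1, h2]; simp
  rcases eq_or_ne i j with rfl | hij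
  · obtain ⟨j', hj'⟩ := Fintype.exists_ne_of_one_lt_card
      (by rw [Fintype.card_fin]; omega) i
    refine ⟨{i, j'}, Finset.card_pair (Ne.symm hj'), ?_⟩
    rintro w hwP ⟨z, hznn, hzw⟩ k
    obtain ⟨a, b, hab⟩ := hw w hwP
    rw [hab k]
    have hA : 0 ≤ a * U i + b * V i := by
      rw [← hab i, hzw i (by simp)]; exact hznn i
    exact key a b hA hA k
  · refine ⟨{i, j}, Finset.card_pair hij, ?_⟩
    rintro w hwP ⟨z, hznn, hzw⟩ k
    obtain ⟨a, b, hab⟩ := hw w hwP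
    rw [hab k]
    have hA : 0 ≤ a * U i + b * V i := by
      rw [← hab i, hzw i (by simp)]; exact hznn i
    have hB : 0 ≤ a * U j + b * V j := by
      rw [← hab j, hzw j (by simp)]; exact hznn j
    exact key a b hA hB k
end

section
/- Let P ⊆ ℚ^d be a 2-dimensional subspace and v ∈ P a nonzero vector. Then there exists an orthant Z of ℚ^d such that v ∈ Z and P ∩ Z contains two linearly independent vectors. -/
/-- For any plane `P ⊆ ℚ^d` and any nonzero `v ∈ P` there is an orthant `Z`
containing `v` such that `P ∩ Z` contains two linearly independent vectors. -/
theorem stmt3 {d : ℕ} (P : Submodule ℚ (Fin d → ℚ)) (hP : Module.finrank ℚ P = 2)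
    (v : Fin d → ℚ) (hv : v ∈ P) (hv0 : v ≠ 0) :
    ∃ t : Fin d → ℚ, (∀ i, t i = 1 ∨ t i = -1) ∧ (∀ i, 0 ≤ v i * t i) ∧
      ∃ a b : Fin d → ℚ, a ∈ P ∧ (∀ i, 0 ≤ a i * t i) ∧
        b ∈ P ∧ (∀ i, 0 ≤ b i * t i) ∧ LinearIndependent ℚ ![a, b] := by
  -- find w ∈ P not in span of v
  have hnle : ¬ (P ≤ Submodule.span ℚ {v}) := by
    intro hle
    have h1 : Module.finrank ℚ P ≤ Module.finrank ℚ (Submodule.span ℚ {v}) :=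
      Submodule.finrank_mono hle
    rw [hP, finrank_span_singleton hv0] at h1
    omega
  obtain ⟨w, hwP, hwspan⟩ := SetLike.not_le_iff_exists.mp hnle
  clear hnle
  have hli : LinearIndependent ℚ ![v, w] := by
    rw [LinearIndependent.pair_iff]
    intro s t hst
    have ht : t = 0 := by
      by_contra ht
      apply hwspan
      rw [Submodule.mem_span_singleton]
      refine ⟨-(s/t), ?_⟩
      funext i
      have h2 := congrFun hst i
      simp only [Pi.add_apply, Pi.smul_apply, smul_eq_mul, Pi.zero_apply] at h2
      simp only [Pi.smul_apply, smul_eq_mul]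
      field_simp
      linarith
    subst ht
    simp only [zero_smul, add_zero] at hst
    rcases smul_eq_zero.mp hst with h | h
    · exact ⟨h, rfl⟩
    · exact absurd h hv0
  -- nonempty index
  obtain ⟨i0, hi0⟩ : ∃ i, v i ≠ 0 := by
    by_contra h
    push_neg at h
    exact hv0 (funext h)
  haveI : Nonempty (Fin d) := ⟨i0⟩
  -- small epsilon
  set f : Fin d → ℚ := fun i => if v i = 0 then 1 else |v i| / (|w i| + 1) with hf
  set ε : ℚ := Finset.univ.inf' Finset.univ_nonempty f with hε
  have hεpos : 0 < ε := by
    rw [hε, Finset.lt_inf'_iff]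
    intro i _
    rw [hf]
    by_cases h : v i = 0
    · simp [h]
    · simp only [h, if_false]
      apply div_pos (abs_pos.mpr h)
      positivity
  have hεle : ∀ i, v i ≠ 0 → ε * |w i| ≤ |v i| := by
    intro i hi
    have h1 : ε ≤ f i := Finset.inf'_le f (Finset.mem_univ i)
    rw [hf] at h1
    simp only [hi, if_false] at h1
    have hw1 : (0:ℚ) < |w i| + 1 := by positivity
    rw [le_div_iff₀ hw1] at h1
    nlinarith [abs_nonneg (w i), hεpos]
  refine ⟨fun i => if v i ≠ 0 then (if 0 < v i then 1 else -1) else (if 0 ≤ w i then 1 else -1),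
    ?_, ?_, v, v + ε • w, hv, ?_, ?_, ?_, ?_⟩
  · intro i
    by_cases h : v i ≠ 0 <;> by_cases h2 : 0 < v i <;> by_cases h3 : 0 ≤ w i <;>
      simp [h, h2, h3]
  · intro i
    beta_reduce
    by_cases h : v i ≠ 0
    · rw [if_pos h]
      by_cases h2 : 0 < v i
      · rw [if_pos h2]; nlinarith
      · rw [if_neg h2]; push_neg at h2; nlinarith
    · push_neg at h; simp [h]
  · intro i
    beta_reduce
    by_cases h : v i ≠ 0
    · rw [if_pos h]
      by_cases h2 : 0 < v i
      · rw [if_pos h2]; nlinarith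
      · rw [if_neg h2]; push_neg at h2; nlinarith
    · push_neg at h; simp [h]
  · exact Submodule.add_mem _ hv (Submodule.smul_mem _ _ hwP)
  · intro i
    simp only [Pi.add_apply, Pi.smul_apply, smul_eq_mul]
    by_cases h : v i ≠ 0
    · have hε2 := hεle i h
      rw [if_pos h]
      by_cases h2 : 0 < v i
      · rw [if_pos h2]
        have hva : |v i| = v i := abs_of_pos h2
        rcases abs_cases (w i) with ⟨ha, _⟩ | ⟨ha, _⟩ <;> nlinarith
      · rw [if_neg h2]
        push_neg at h2
        have hva : |v i| = -v i := abs_of_neg (lt_of_le_of_ne h2 h)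
        rcases abs_cases (w i) with ⟨ha, _⟩ | ⟨ha, _⟩ <;> nlinarith
    · push_neg at h
      rw [if_neg (by simpa using h)]
      rw [h, zero_add]
      by_cases h3 : 0 ≤ w i
      · rw [if_pos h3]; nlinarith
      · rw [if_neg h3]; push_neg at h3; nlinarith
  · rw [LinearIndependent.pair_iff] at hli ⊢
    intro s t hst
    have h1 : (s + t) • v + (t * ε) • w = 0 := by
      rw [← hst]
      module
    obtain ⟨h2, h3⟩ := hli _ _ h1
    have ht : t = 0 := by
      rcases mul_eq_zero.mp h3 with h | h
      · exact h
      · exact absurd h hεpos.ne'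
    constructor
    · rw [ht] at h2; linarith
    · exact ht
end

section
/- Let P ⊆ ℚ^d be a plane, Z an orthant, and suppose P ∩ Z = cone({u, v}) where u, v are nonzero vectors and P ∩ Z contains two linearly independent vectors. Then u and v are linearly independent, and the supports supp(u) and supp(v) are incomparable with respect to inclusion (neither supp(u) ⊆ supp(v) nor supp(v) ⊆ supp(u)). -/
lemma stmt4_aux {d : ℕ} (P : Submodule ℚ (Fin d → ℚ)) (t : Fin d → ℚ)
    (ht : ∀ i, t i = 1 ∨ t i = -1) (u v : Fin d → ℚ) (hu0 : u ≠ 0)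
    (hcone : {x : Fin d → ℚ | x ∈ P ∧ ∀ i, 0 ≤ x i * t i} =
      {x : Fin d → ℚ | ∃ a b : ℚ, 0 ≤ a ∧ 0 ≤ b ∧ x = a • u + b • v})
    (hind : ∀ s r : ℚ, s • u + r • v = 0 → s = 0 ∧ r = 0)
    (hsub : {i | u i ≠ 0} ⊆ {i | v i ≠ 0}) : False := by
  have htne : ∀ i, t i ≠ 0 := by
    intro i; rcases ht i with h | h <;> rw [h] <;> norm_num
  have huset : u ∈ {x : Fin d → ℚ | x ∈ P ∧ ∀ i, 0 ≤ x i * t i} := by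
    rw [hcone]; exact ⟨1, 0, zero_le_one, le_refl 0, by simp⟩
  have hvset : v ∈ {x : Fin d → ℚ | x ∈ P ∧ ∀ i, 0 ≤ x i * t i} := by
    rw [hcone]; exact ⟨0, 1, le_refl 0, zero_le_one, by simp⟩
  have hpos : ∀ (x : Fin d → ℚ), (∀ i, 0 ≤ x i * t i) → ∀ i, x i ≠ 0 →
      0 < x i * t i := by
    intro x hx i hi
    exact lt_of_le_of_ne (hx i) (Ne.symm (mul_ne_zero hi (htne i)))
  set S : Finset (Fin d) := Finset.univ.filter (fun i => u i ≠ 0) with hS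
  have hSne : S.Nonempty := by
    obtain ⟨i, hi⟩ := Function.ne_iff.mp hu0
    exact ⟨i, Finset.mem_filter.mpr ⟨Finset.mem_univ i, by simpa using hi⟩⟩
  set ε : ℚ := S.inf' hSne (fun i => v i * t i / (u i * t i)) with hεdef
  have hmemS : ∀ i ∈ S, u i ≠ 0 := by intro i hi; simpa [hS] using hi
  have hε : 0 < ε := by
    rw [hεdef, Finset.lt_inf'_iff]
    intro i hi
    have hu := hpos u huset.2 i (hmemS i hi)
    have hv := hpos v hvset.2 i (hsub (hmemS i hi))
    exact div_pos hv hu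
  have hmem : v - ε • u ∈ {x : Fin d → ℚ | x ∈ P ∧ ∀ i, 0 ≤ x i * t i} := by
    constructor
    · exact P.sub_mem hvset.1 (P.smul_mem ε huset.1)
    · intro i
      by_cases hui : u i = 0
      · have : (v - ε • u) i * t i = v i * t i := by
          simp [hui, Pi.sub_apply, Pi.smul_apply]
        rw [this]; exact hvset.2 i
      · have hiS : i ∈ S := by simp [hS, hui]
        have hut := hpos u huset.2 i hui
        have hle : ε ≤ v i * t i / (u i * t i) := Finset.inf'_le _ hiS
        have : ε * (u i * t i) ≤ v i * t i := by
          rw [← le_div_iff₀ hut]; exact hle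
        have hcalc : (v - ε • u) i * t i = v i * t i - ε * (u i * t i) := by
          simp [Pi.sub_apply, Pi.smul_apply, smul_eq_mul]; ring
        rw [hcalc]; linarith
  rw [hcone] at hmem
  obtain ⟨a, b, ha, hb, heq⟩ := hmem
  have h0 : (a + ε) • u + (b - 1) • v = 0 := by
    have h1 : (a + ε) • u + (b - 1) • v = (a • u + b • v) - (v - ε • u) := by module
    rw [← heq, sub_self] at h1
    exact h1
  have := (hind _ _ h0).1
  linarith
/-- If `P ∩ Z = cone({u, v})` for nonzero `u, v`, where `P` is a plane and `Z`
an orthant whose intersection with `P` contains two linearly independent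
vectors, then `u` and `v` are linearly independent and their supports are
incomparable under inclusion. -/
theorem stmt4 {d : ℕ} (P : Submodule ℚ (Fin d → ℚ)) (hP : Module.finrank ℚ P = 2)
    (t : Fin d → ℚ) (ht : ∀ i, t i = 1 ∨ t i = -1)
    (u v : Fin d → ℚ) (hu0 : u ≠ 0) (hv0 : v ≠ 0)
    (hcone : {x : Fin d → ℚ | x ∈ P ∧ ∀ i, 0 ≤ x i * t i} =
      {x : Fin d → ℚ | ∃ a b : ℚ, 0 ≤ a ∧ 0 ≤ b ∧ x = a • u + b • v})
    (hli : ∃ a b : Fin d → ℚ, a ∈ P ∧ (∀ i, 0 ≤ a i * t i) ∧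
      b ∈ P ∧ (∀ i, 0 ≤ b i * t i) ∧ LinearIndependent ℚ ![a, b]) :
    LinearIndependent ℚ ![u, v] ∧
      ¬ ({i | u i ≠ 0} ⊆ {i | v i ≠ 0}) ∧ ¬ ({i | v i ≠ 0} ⊆ {i | u i ≠ 0}) := by
  obtain ⟨a, b, haP, hat, hbP, hbt, hab⟩ := hli
  have hamem : a ∈ {x : Fin d → ℚ | ∃ a b : ℚ, 0 ≤ a ∧ 0 ≤ b ∧ x = a • u + b • v} := by
    rw [← hcone]; exact ⟨haP, hat⟩
  have hbmem : b ∈ {x : Fin d → ℚ | ∃ a b : ℚ, 0 ≤ a ∧ 0 ≤ b ∧ x = a • u + b • v} := by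
    rw [← hcone]; exact ⟨hbP, hbt⟩
  obtain ⟨a1, a2, _, _, haeq⟩ := hamem
  obtain ⟨b1, b2, _, _, hbeq⟩ := hbmem
  have huv : LinearIndependent ℚ ![u, v] := by
    by_contra hdep
    rw [linearIndependent_fin2] at hdep
    push_neg at hdep
    simp only [Matrix.cons_val_one, Matrix.head_cons, Matrix.cons_val_zero] at hdep
    obtain ⟨c, hc⟩ := hdep hv0
    -- u = c • v
    have ha' : a = (a1 * c + a2) • v := by
      rw [haeq, ← hc]; rw [add_smul, mul_smul]
    have hb' : b = (b1 * c + b2) • v := by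
      rw [hbeq, ← hc]; rw [add_smul, mul_smul]
    rw [linearIndependent_fin2] at hab
    obtain ⟨hbne, hnab⟩ := hab
    simp only [Matrix.cons_val_one, Matrix.head_cons, Matrix.cons_val_zero] at hbne hnab
    have hβ : (b1 * c + b2) ≠ 0 := by
      intro h; apply hbne; rw [hb', h, zero_smul]
    apply hnab ((a1 * c + a2) / (b1 * c + b2))
    rw [hb', ha', smul_smul, div_mul_cancel₀ _ hβ]
  have hind : ∀ s r : ℚ, s • u + r • v = 0 → s = 0 ∧ r = 0 := by
    intro s r h
    exact LinearIndependent.pair_iff.mp huv s r h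
  have hind' : ∀ s r : ℚ, s • v + r • u = 0 → s = 0 ∧ r = 0 := by
    intro s r h
    have := hind r s (by rw [add_comm] at h; exact h)
    exact ⟨this.2, this.1⟩
  have hcone' : {x : Fin d → ℚ | x ∈ P ∧ ∀ i, 0 ≤ x i * t i} =
      {x : Fin d → ℚ | ∃ a b : ℚ, 0 ≤ a ∧ 0 ≤ b ∧ x = a • v + b • u} := by
    rw [hcone]; ext x
    constructor
    · rintro ⟨p, q, hp, hq, h⟩; exact ⟨q, p, hq, hp, by rw [h, add_comm]⟩
    · rintro ⟨p, q, hp, hq, h⟩; exact ⟨q, p, hq, hp, by rw [h, add_comm]⟩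
  exact ⟨huv, fun h => stmt4_aux P t ht u v hu0 hcone hind h,
    fun h => stmt4_aux P t ht v u hv0 hcone' hind' h⟩
end

section
/- For every monotone inflationary function h : ℕ → ℕ and every ordinal α ≤ ω^ω, the Hardy function h^α : ℕ → ℕ is monotone and inflationary (i.e., x ≤ h^α(x) for all x, and h^α(x) ≤ h^α(y) whenever x ≤ y). -/
/-!
Every `α < ω^ω` is `ω^eₙ + ⋯ + ω^e₁` with `e₁ ≤ ⋯ ≤ eₙ`, and by uniqueness of this Cantor normal
form each rule of `HardyRel` peels off the smallest term, so `HardyRel h α` is the graph of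
`h^(ω^eₙ) ∘ ⋯ ∘ h^(ω^e₁)`, with `h^(ω^(k+1))(x) = (h^(ω^k))^[x+1](x)`.
Iterates of a monotone inflationary function are monotone inflationary, and grow with the number
of iterations; this makes every `h^(ω^k)` monotone inflationary and gives `h^(ω^k) ≤ h^(ω^(k+1))`,
which handles `h^(ω^ω)(x) = h^(ω^(x+1))(x)`.
-/

open Ordinal

/-- The graph of the Hardy hierarchy `h^α` for ordinals `α ≤ ω^ω`, defined with
the standard fundamental sequences `(ω^ω)(x) = ω^(x+1)` and
`(β + ω^(k+1))(x) = β + ω^k·(x+1)` (for `β + ω^(k+1)` in Cantor Normal Form,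
i.e. `ω^(k+1) ∣ β`).  `HardyRel h α x y` means `h^α(x) = y`. -/
inductive HardyRel (h : ℕ → ℕ) : Ordinal → ℕ → ℕ → Prop
  | zero (x : ℕ) : HardyRel h 0 x x
  | succ (α : Ordinal) (x y : ℕ) : HardyRel h α (h x) y → HardyRel h (α + 1) x y
  | top (x y : ℕ) : HardyRel h (omega0 ^ (x + 1 : ℕ)) x y →
      HardyRel h (omega0 ^ omega0) x y
  | limit (β : Ordinal) (k x y : ℕ) : omega0 ^ (k + 1) ∣ β →
      HardyRel h (β + omega0 ^ k * ((x + 1 : ℕ) : Ordinal)) x y →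
      HardyRel h (β + omega0 ^ (k + 1)) x y

universe u

/-- `hardyOmegaPow h k` is the Hardy function `h^(ω^k)`. -/
def hardyOmegaPow (h : ℕ → ℕ) : ℕ → ℕ → ℕ
  | 0 => h
  | k + 1 => fun x => (hardyOmegaPow h k)^[x + 1] x

/-- `hardyList h [e₁, …, eₙ] = h^(ω^eₙ) ∘ ⋯ ∘ h^(ω^e₁)`, which is `h^(ω^eₙ + ⋯ + ω^e₁)`
when `e₁ ≤ ⋯ ≤ eₙ`. -/
def hardyList (h : ℕ → ℕ) : List ℕ → ℕ → ℕ
  | [] => id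
  | e :: L => hardyList h L ∘ hardyOmegaPow h e

section HardyFunctions

variable {h : ℕ → ℕ}

theorem hardyList_append (A B : List ℕ) :
    hardyList h (A ++ B) = hardyList h B ∘ hardyList h A := by
  induction A with
  | nil => rfl
  | cons e A ih => simp only [List.cons_append, hardyList, ih, Function.comp_assoc]

theorem hardyList_replicate (n k : ℕ) :
    hardyList h (List.replicate n k) = (hardyOmegaPow h k)^[n] := by
  induction n with
  | zero => rfl
  | succ n ih => rw [List.replicate_succ, hardyList, ih, Function.iterate_succ]

theorem le_hardyOmegaPow (hinfl : ∀ x, x ≤ h x) (k x : ℕ) : x ≤ hardyOmegaPow h k x := by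
  induction k generalizing x with
  | zero => exact hinfl x
  | succ k ih => exact Function.id_le_iterate_of_id_le ih _ x

theorem monotone_hardyOmegaPow (hmono : Monotone h) (hinfl : ∀ x, x ≤ h x) (k : ℕ) :
    Monotone (hardyOmegaPow h k) := by
  induction k with
  | zero => exact hmono
  | succ k ih =>
    intro x x' hx
    calc (hardyOmegaPow h k)^[x + 1] x
        ≤ (hardyOmegaPow h k)^[x + 1] x' := ih.iterate _ hx
      _ ≤ (hardyOmegaPow h k)^[x' + 1] x' :=
          ih.monotone_iterate_of_le_map (le_hardyOmegaPow hinfl k x') (by omega)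

theorem monotone_hardyOmegaPow_left (hinfl : ∀ x, x ≤ h x) : Monotone (hardyOmegaPow h) :=
  monotone_nat_of_le_succ fun k x =>
    Function.monotone_iterate_of_id_le (le_hardyOmegaPow hinfl k) (by omega : 1 ≤ x + 1) x

theorem le_hardyList (hinfl : ∀ x, x ≤ h x) (L : List ℕ) (x : ℕ) : x ≤ hardyList h L x := by
  induction L generalizing x with
  | nil => exact le_rfl
  | cons e L ih => exact (le_hardyOmegaPow hinfl e x).trans (ih _)

theorem monotone_hardyList (hmono : Monotone h) (hinfl : ∀ x, x ≤ h x) (L : List ℕ) :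
    Monotone (hardyList h L) := by
  induction L with
  | nil => exact monotone_id
  | cons e L ih => exact ih.comp (monotone_hardyOmegaPow hmono hinfl e)

end HardyFunctions

def omegaPowSum : List ℕ → Ordinal.{u}
  | [] => 0
  | e :: L => omegaPowSum L + omega0 ^ e

theorem omegaPowSum_append (A B : List ℕ) :
    omegaPowSum.{u} (A ++ B) = omegaPowSum B + omegaPowSum A := by
  induction A with
  | nil => simp [omegaPowSum]
  | cons e A ih => simp only [List.cons_append, omegaPowSum, ih, add_assoc]

theorem omegaPowSum_replicate (n k : ℕ) :
    omegaPowSum.{u} (List.replicate n k) = omega0 ^ k * (n : Ordinal) := by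
  induction n with
  | zero => simp [omegaPowSum]
  | succ n ih => rw [List.replicate_succ, omegaPowSum, ih, Nat.cast_succ, mul_add_one]

theorem omegaPowSum_eq_zero {L : List ℕ} : omegaPowSum.{u} L = 0 ↔ L = [] := by
  cases L with
  | nil => simp [omegaPowSum]
  | cons e L => simp [omegaPowSum, omega0_ne_zero]

theorem omegaPowSum_lt_omega0_opow_omega0 (L : List ℕ) :
    omegaPowSum.{u} L < omega0 ^ omega0 := by
  induction L with
  | nil => exact opow_pos _ omega0_pos
  | cons e L ih =>
    refine isPrincipal_add_omega0_opow _ ih ?_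
    rw [← opow_natCast]
    exact (opow_lt_opow_iff_right one_lt_omega0).2 (natCast_lt_omega0 e)

theorem omega0_pow_dvd_omegaPowSum {e : ℕ} {L : List ℕ} (hL : ∀ b ∈ L, e ≤ b) :
    (omega0 : Ordinal.{u}) ^ e ∣ omegaPowSum L := by
  induction L with
  | nil => exact dvd_zero _
  | cons b L ih =>
    exact dvd_add (ih fun c hc => hL c (List.mem_cons_of_mem _ hc))
      (pow_dvd_pow _ (hL b List.mem_cons_self))

theorem not_omega0_pow_succ_dvd_add {a : ℕ} {β : Ordinal} (hβ : omega0 ^ a ∣ β) :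
    ¬ omega0 ^ (a + 1) ∣ β + omega0 ^ a := by
  obtain ⟨c, rfl⟩ := hβ
  rw [← mul_add_one, pow_succ, mul_dvd_mul_iff_left (pow_ne_zero _ omega0_ne_zero),
    ← isSuccPrelimit_iff_omega0_dvd, ← Order.succ_eq_add_one]
  exact Order.not_isSuccPrelimit_succ c

theorem eq_of_add_omega0_pow_eq {a b : ℕ} {β γ : Ordinal} (hβ : omega0 ^ a ∣ β)
    (hγ : omega0 ^ b ∣ γ) (h : β + omega0 ^ a = γ + omega0 ^ b) : a = b ∧ β = γ := by
  have not_lt_of_eq : ∀ {a b : ℕ} {β γ : Ordinal}, omega0 ^ a ∣ β → omega0 ^ b ∣ γ →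
      β + omega0 ^ a = γ + omega0 ^ b → ¬ a < b := fun hβ hγ h hab =>
    not_omega0_pow_succ_dvd_add hβ <| h ▸ dvd_add ((pow_dvd_pow _ hab).trans hγ) (pow_dvd_pow _ hab)
  obtain rfl : a = b := le_antisymm (Nat.not_lt.1 (not_lt_of_eq hγ hβ h.symm))
    (Nat.not_lt.1 (not_lt_of_eq hβ hγ h))
  obtain ⟨c, rfl⟩ := hβ
  obtain ⟨d, rfl⟩ := hγ
  rw [← mul_add_one, ← mul_add_one, mul_right_inj' (pow_ne_zero _ omega0_ne_zero),
    ← Order.succ_eq_add_one, ← Order.succ_eq_add_one] at h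
  exact ⟨rfl, congrArg _ (Order.succ_injective h)⟩

theorem omegaPowSum_eq_add_omega0_pow {L : List ℕ} (hL : L.Pairwise (· ≤ ·)) {β : Ordinal}
    {k : ℕ} (hβ : omega0 ^ k ∣ β) (h : omegaPowSum L = β + omega0 ^ k) :
    ∃ L', L = k :: L' ∧ omegaPowSum L' = β := by
  cases L with
  | nil => simp [omegaPowSum, eq_comm (a := (0 : Ordinal)), omega0_ne_zero] at h
  | cons e L =>
    obtain ⟨rfl, hβ'⟩ := eq_of_add_omega0_pow_eq
      (omega0_pow_dvd_omegaPowSum (List.pairwise_cons.1 hL).1) hβ h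
    exact ⟨L, rfl, hβ'⟩

theorem exists_omegaPowSum_eq_of_lt_omega0_pow (n : ℕ) {α : Ordinal} (hα : α < omega0 ^ n) :
    ∃ L : List ℕ, L.Pairwise (· ≤ ·) ∧ (∀ e ∈ L, e < n) ∧ omegaPowSum L = α := by
  induction n generalizing α with
  | zero =>
    rw [pow_zero, Order.lt_one_iff] at hα
    exact ⟨[], List.Pairwise.nil, by simp, hα ▸ rfl⟩
  | succ n ih =>
    have hne : (omega0 : Ordinal) ^ n ≠ 0 := pow_ne_zero _ omega0_ne_zero
    obtain ⟨m, hm⟩ := lt_omega0.1 <| (lt_mul_iff_div_lt hne).1 (pow_succ omega0 n ▸ hα)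
    obtain ⟨L, hL, hLn, hLα⟩ := ih (mod_lt α hne)
    refine ⟨L ++ List.replicate m n, ?_, ?_, ?_⟩
    · refine List.pairwise_append.2 ⟨hL, List.pairwise_replicate.2 (Or.inr le_rfl), ?_⟩
      intro a ha b hb
      rw [List.eq_of_mem_replicate hb]
      exact (hLn a ha).le
    · intro e he
      rcases List.mem_append.1 he with he | he
      · exact (hLn e he).trans n.lt_succ_self
      · rw [List.eq_of_mem_replicate he]
        exact n.lt_succ_self
    · rw [omegaPowSum_append, omegaPowSum_replicate, hLα, ← hm, div_add_mod]

theorem exists_omegaPowSum_eq {α : Ordinal} (hα : α < omega0 ^ omega0) :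
    ∃ L : List ℕ, L.Pairwise (· ≤ ·) ∧ omegaPowSum L = α := by
  obtain ⟨c, hc, hαc⟩ := (lt_opow_of_isSuccLimit omega0_ne_zero isSuccLimit_omega0).1 hα
  obtain ⟨n, rfl⟩ := lt_omega0.1 hc
  obtain ⟨L, hL, -, hLα⟩ := exists_omegaPowSum_eq_of_lt_omega0_pow n (opow_natCast omega0 n ▸ hαc)
  exact ⟨L, hL, hLα⟩

namespace HardyRel

variable {h : ℕ → ℕ} {x y : ℕ}

theorem eq_hardyList {α : Ordinal} (D : HardyRel h α x y) {L : List ℕ}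
    (hL : L.Pairwise (· ≤ ·)) (hLα : omegaPowSum L = α) : y = hardyList h L x := by
  induction D generalizing L with
  | zero x =>
    rw [omegaPowSum_eq_zero.1 hLα]
    rfl
  | succ α x y _ ih =>
    obtain ⟨L', rfl, hL'α⟩ := omegaPowSum_eq_add_omega0_pow hL (one_dvd α) (by rwa [pow_zero])
    exact ih (List.pairwise_cons.1 hL).2 hL'α
  | top x y _ _ => exact absurd hLα (omegaPowSum_lt_omega0_opow_omega0 L).ne
  | limit β k x y hβ _ ih =>
    obtain ⟨L', rfl, hL'β⟩ := omegaPowSum_eq_add_omega0_pow hL hβ hLα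
    have hsorted : (List.replicate (x + 1) k ++ L').Pairwise (· ≤ ·) := by
      refine List.pairwise_append.2 ⟨List.pairwise_replicate.2 (Or.inr le_rfl),
        (List.pairwise_cons.1 hL).2, fun a ha b hb => ?_⟩
      rw [List.eq_of_mem_replicate ha]
      exact k.le_succ.trans ((List.pairwise_cons.1 hL).1 b hb)
    have hunfold :
        hardyList h ((k + 1) :: L') x = hardyList h (List.replicate (x + 1) k ++ L') x := by
      rw [hardyList_append, hardyList_replicate]
      rfl
    rw [hunfold]
    exact ih hsorted (by rw [omegaPowSum_append, omegaPowSum_replicate, hL'β])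

theorem eq_hardyOmegaPow_of_omega0_opow_omega0 (D : HardyRel h (omega0 ^ omega0) x y) :
    y = hardyOmegaPow h (x + 1) x := by
  generalize hα : omega0 ^ omega0 = α at D
  cases D with
  | zero => exact absurd hα (opow_pos _ omega0_pos).ne'
  | succ α x y _ =>
    have hlim := isSuccLimit_opow one_lt_omega0 isSuccLimit_omega0
    rw [hα, ← Order.succ_eq_add_one] at hlim
    exact absurd hlim.isSuccPrelimit (Order.not_isSuccPrelimit_succ α)
  | top x y D => exact D.eq_hardyList (List.pairwise_singleton _ _) (zero_add _)
  | limit β k x y hβ _ =>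
    refine absurd (hα ▸ ?_ : omega0 ^ (k + 1 + 1) ∣ β + omega0 ^ (k + 1))
      (not_omega0_pow_succ_dvd_add hβ)
    rw [← opow_natCast]
    exact opow_dvd_opow _ (natCast_lt_omega0 _).le

end HardyRel

theorem exists_monotone_forall_hardyRel_eq (h : ℕ → ℕ) (hmono : Monotone h)
    (hinfl : ∀ x, x ≤ h x) {α : Ordinal} (hα : α ≤ omega0 ^ omega0) :
    ∃ f : ℕ → ℕ, Monotone f ∧ (∀ x, x ≤ f x) ∧ ∀ x y, HardyRel h α x y → y = f x := by
  rcases hα.lt_or_eq with hα | rfl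
  · obtain ⟨L, hL, rfl⟩ := exists_omegaPowSum_eq hα
    exact ⟨hardyList h L, monotone_hardyList hmono hinfl L, le_hardyList hinfl L,
      fun x y D => D.eq_hardyList hL rfl⟩
  · refine ⟨fun x => hardyOmegaPow h (x + 1) x, fun x x' hx => ?_,
      fun x => le_hardyOmegaPow hinfl _ x, fun x y D => D.eq_hardyOmegaPow_of_omega0_opow_omega0⟩
    calc hardyOmegaPow h (x + 1) x
        ≤ hardyOmegaPow h (x + 1) x' := monotone_hardyOmegaPow hmono hinfl _ hx
      _ ≤ hardyOmegaPow h (x' + 1) x' := monotone_hardyOmegaPow_left hinfl (by omega) x'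

/-- For every monotone inflationary `h : ℕ → ℕ` and every ordinal `α ≤ ω^ω`,
the Hardy function `h^α` is inflationary and monotone. -/
theorem stmt6 (h : ℕ → ℕ) (hmono : Monotone h) (hinfl : ∀ x, x ≤ h x)
    (α : Ordinal) (hα : α ≤ omega0 ^ omega0) :
    (∀ x y, HardyRel h α x y → x ≤ y) ∧
    (∀ x x' y y', x ≤ x' → HardyRel h α x y → HardyRel h α x' y' → y ≤ y') := by
  obtain ⟨f, hf_mono, hf_le, hf⟩ := exists_monotone_forall_hardyRel_eq h hmono hinfl hα
  refine ⟨fun x y D => hf x y D ▸ hf_le x, fun x x' y y' hx D D' => ?_⟩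
  rw [hf x y D, hf x' y' D']
  exact hf_mono hx
end

section
/- For every monotone inflationary function h : ℕ → ℕ, every ordinal α ≤ ω^ω, and every x ∈ ℕ, iterating h exactly h_α(x) times starting from x yields h^α(x): h^{(h_α(x))}(x) = h^α(x), where the exponent on the left denotes ordinary function iteration. -/
/-!
Both hierarchies unfold `α` along the same fundamental sequences, and `h_α` counts exactly
the successor steps at which `h^α` applies `h`; so an induction on the derivation of
`h^α(x)` goes through once we know that any derivation of `h_α(x)` takes the same step.
It does because `0`, `γ + 1 = γ + ω^0`, `ω^ω` and `β + ω^(k+1)` with `ω^(k+1) ∣ β` are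
distinct shapes, and `β + ω^e` with `ω^e ∣ β` determines `β` and `e`: the exponent `e` is
the largest one for which `ω^e` divides the sum.
-/

open Ordinal

/-- The graph of the Cichoń hierarchy `h_α` for ordinals `α ≤ ω^ω`, with the
same standard fundamental sequences.  `CichonRel h α x n` means `h_α(x) = n`. -/
inductive CichonRel (h : ℕ → ℕ) : Ordinal → ℕ → ℕ → Prop
  | zero (x : ℕ) : CichonRel h 0 x 0
  | succ (α : Ordinal) (x n : ℕ) : CichonRel h α (h x) n → CichonRel h (α + 1) x (n + 1)
  | top (x n : ℕ) : CichonRel h (omega0 ^ (x + 1 : ℕ)) x n →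
      CichonRel h (omega0 ^ omega0) x n
  | limit (β : Ordinal) (k x n : ℕ) : omega0 ^ (k + 1) ∣ β →
      CichonRel h (β + omega0 ^ k * ((x + 1 : ℕ) : Ordinal)) x n →
      CichonRel h (β + omega0 ^ (k + 1)) x n

namespace Ordinal

theorem not_omega0_dvd_add_one (γ : Ordinal) : ¬ω ∣ γ + 1 := by
  rw [← isSuccPrelimit_iff_omega0_dvd, ← Order.succ_eq_add_one]
  exact Order.not_isSuccPrelimit_succ γ

theorem not_omega0_pow_succ_dvd_add {β : Ordinal} {e : ℕ} (hβ : ω ^ e ∣ β) :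
    ¬ω ^ (e + 1) ∣ β + ω ^ e := by
  obtain ⟨γ, rfl⟩ := hβ
  rintro ⟨δ, hδ⟩
  rw [← mul_add_one, pow_succ, mul_assoc,
    mul_left_cancel_iff_of_pos (pow_pos omega0_pos e)] at hδ
  exact not_omega0_dvd_add_one γ ⟨δ, hδ⟩

theorem add_omega0_pow_ne_zero (β : Ordinal) (e : ℕ) : β + ω ^ e ≠ 0 :=
  (add_pos_of_right (pow_pos omega0_pos e) β).ne'

theorem omega0_opow_omega0_ne_add_omega0_pow {β : Ordinal} {e : ℕ} (hβ : ω ^ e ∣ β) :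
    ω ^ ω ≠ β + ω ^ e := fun h =>
  not_omega0_pow_succ_dvd_add hβ <| h ▸ opow_natCast ω (e + 1) ▸
    opow_dvd_opow ω (natCast_lt_omega0 _).le

theorem add_omega0_pow_inj {β β' : Ordinal} {e e' : ℕ} (hβ : ω ^ e ∣ β) (hβ' : ω ^ e' ∣ β')
    (h : β + ω ^ e = β' + ω ^ e') : e = e' ∧ β = β' := by
  have exponent_le : ∀ {β β' : Ordinal} {e e' : ℕ}, ω ^ e ∣ β → ω ^ e' ∣ β' →
      β + ω ^ e = β' + ω ^ e' → e ≤ e' := by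
    intro β β' e e' hβ hβ' h
    by_contra! hlt
    have hdvd : ω ^ (e' + 1) ∣ ω ^ e := pow_dvd_pow ω hlt
    exact not_omega0_pow_succ_dvd_add hβ' (h ▸ dvd_add (hdvd.trans hβ) hdvd)
  obtain rfl := (exponent_le hβ hβ' h).antisymm (exponent_le hβ' hβ h.symm)
  refine ⟨rfl, ?_⟩
  obtain ⟨γ, rfl⟩ := hβ
  obtain ⟨γ', rfl⟩ := hβ'
  rw [← mul_add_one, ← mul_add_one, mul_left_cancel_iff_of_pos (pow_pos omega0_pos e),
    Order.add_one_inj] at h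
  rw [h]

end Ordinal

namespace CichonRel

universe u

variable {h : ℕ → ℕ} {x n : ℕ}

theorem eq_zero_of_zero (hc : CichonRel h 0 x n) : n = 0 := by
  generalize hα : (0 : Ordinal) = α at hc
  cases hc with
  | zero => rfl
  | succ γ => exact absurd hα.symm (add_pos_of_right zero_lt_one γ).ne'
  | top => exact absurd hα.symm (opow_pos ω omega0_pos).ne'
  | limit β k => exact absurd hα.symm (add_omega0_pow_ne_zero β (k + 1))

theorem exists_of_succ {γ : Ordinal} (hc : CichonRel h (γ + 1) x n) :
    ∃ m, n = m + 1 ∧ CichonRel h γ (h x) m := by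
  generalize hα : γ + 1 = α at hc
  cases hc with
  | zero => exact absurd hα (add_pos_of_right zero_lt_one γ).ne'
  | succ γ' _ m hm =>
    obtain rfl := Order.add_one_inj.mp hα
    exact ⟨m, rfl, hm⟩
  | top =>
    rw [← pow_zero ω] at hα
    exact absurd hα.symm (omega0_opow_omega0_ne_add_omega0_pow (one_dvd γ))
  | limit β k _ _ hβ =>
    rw [← pow_zero ω] at hα
    exact absurd (add_omega0_pow_inj (one_dvd γ) hβ hα).1 (Nat.succ_ne_zero k).symm

theorem of_omega0_opow_omega0 (hc : CichonRel.{u} h (ω ^ ω) x n) :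
    CichonRel.{u} h (ω ^ (x + 1)) x n := by
  generalize hα : ω ^ ω = α at hc
  cases hc with
  | zero => exact absurd hα (opow_pos ω omega0_pos).ne'
  | succ γ =>
    rw [← pow_zero ω] at hα
    exact absurd hα (omega0_opow_omega0_ne_add_omega0_pow (one_dvd γ))
  | top _ _ hc => exact hc
  | limit β k _ _ hβ => exact absurd hα (omega0_opow_omega0_ne_add_omega0_pow hβ)

theorem of_add_omega0_pow_succ {β : Ordinal} {k : ℕ} (hβ : ω ^ (k + 1) ∣ β)
    (hc : CichonRel h (β + ω ^ (k + 1)) x n) :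
    CichonRel h (β + ω ^ k * ((x + 1 : ℕ) : Ordinal)) x n := by
  generalize hα : β + ω ^ (k + 1) = α at hc
  cases hc with
  | zero => exact absurd hα (add_omega0_pow_ne_zero β (k + 1))
  | succ γ =>
    rw [← pow_zero ω] at hα
    exact absurd (add_omega0_pow_inj hβ (one_dvd γ) hα).1 (Nat.succ_ne_zero k)
  | top => exact absurd hα.symm (omega0_opow_omega0_ne_add_omega0_pow hβ)
  | limit β' k' _ _ hβ' hc =>
    obtain ⟨hk, rfl⟩ := add_omega0_pow_inj hβ' hβ hα.symm
    obtain rfl : k' = k := Nat.succ_injective hk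
    exact hc

end CichonRel

theorem stmt8_general (h : ℕ → ℕ) (α : Ordinal) :
    ∀ x n y, CichonRel h α x n → HardyRel h α x y → h^[n] x = y := by
  intro x n y hc hH
  induction hH generalizing n with
  | zero => rw [hc.eq_zero_of_zero, Function.iterate_zero_apply]
  | succ γ x y _ ih =>
    obtain ⟨m, rfl, hm⟩ := hc.exists_of_succ
    exact ih m hm
  | top x y _ ih => exact ih n hc.of_omega0_opow_omega0
  | limit β k x y hβ _ ih => exact ih n (hc.of_add_omega0_pow_succ hβ)

/-- For every monotone inflationary `h : ℕ → ℕ`, every ordinal `α ≤ ω^ω` and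
every `x`, iterating `h` exactly `h_α(x)` times starting from `x` yields
`h^α(x)`. -/
theorem stmt8 (h : ℕ → ℕ) (hmono : Monotone h) (hinfl : ∀ x, x ≤ h x)
    (α : Ordinal) (hα : α ≤ omega0 ^ omega0) :
    ∀ x n y, CichonRel h α x n → HardyRel h α x y → h^[n] x = y :=
  stmt8_general h α
end

section
/- Let G = (Q, T) be a d-dimensional VASS whose underlying directed graph is strongly connected and let t be a transition of G. Then Cyc(G/t) = Cyc(G), where Cyc(G/t) is the ℚ-vector space spanned by effects of cycles of G containing t, and Cyc(G) is the span of effects of all cycles. -/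
/-- A `d`-dimensional vector addition system with states: a finite set of
states (`Fin n`) and a finite set of transitions labelled by vectors in `ℤ^d`. -/
structure VASS (d : ℕ) where
  n : ℕ
  T : Finset (Fin n × (Fin d → ℤ) × Fin n)

namespace VASS

variable {d : ℕ}

abbrev Trans (G : VASS d) := Fin G.n × (Fin d → ℤ) × Fin G.n

/-- `IsPathFrom G p q π` : the word of transitions `π` is a path of `G`
from state `p` to state `q`. -/
def IsPathFrom (G : VASS d) : Fin G.n → Fin G.n → List G.Trans → Prop
  | p, q, [] => p = q
  | p, q, t :: rest => t ∈ G.T ∧ t.1 = p ∧ IsPathFrom G t.2.2 q rest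

/-- The effect of a path: the sum of the vectors on its transitions. -/
def effect {m : ℕ} (π : List (Fin m × (Fin d → ℤ) × Fin m)) : Fin d → ℤ :=
  (π.map fun t => t.2.1).sum

/-- The effect of a path, as a vector over `ℚ`. -/
def effectQ {m : ℕ} (π : List (Fin m × (Fin d → ℤ) × Fin m)) : Fin d → ℚ :=
  fun i => ((effect π i : ℤ) : ℚ)

/-- The cycle space `Cyc(G)`: the `ℚ`-span of the effects of all cycles. -/
def Cyc (G : VASS d) : Submodule ℚ (Fin d → ℚ) :=
  Submodule.span ℚ {v | ∃ (q : Fin G.n) (π : List G.Trans), IsPathFrom G q q π ∧ v = effectQ π}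

/-- `Cyc(G/t)`: the `ℚ`-span of the effects of all cycles containing `t`. -/
def CycThrough (G : VASS d) (t : G.Trans) : Submodule ℚ (Fin d → ℚ) :=
  Submodule.span ℚ
    {v | ∃ (q : Fin G.n) (π : List G.Trans), IsPathFrom G q q π ∧ t ∈ π ∧ v = effectQ π}

/-- `G` is strongly connected if every state reaches every other via a path. -/
def StronglyConnected (G : VASS d) : Prop :=
  ∀ p q : Fin G.n, ∃ π : List G.Trans, IsPathFrom G p q π

end VASS

open VASS

/-!
Strong connectivity gives paths `ρ` from the target of `t` to any state `q` and `σ` from `q`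
back to the source of `t`. A cycle `π` at `q` can then be spliced into the cycle `t ρ σ`, and
`Δ(π) = Δ(t ρ π σ) - Δ(t ρ σ)` is a difference of effects of cycles through `t`.
-/

namespace VASS

variable {d : ℕ} {G : VASS d}

theorem IsPathFrom.append :
    ∀ {π ρ : List G.Trans} {p q r : Fin G.n},
      IsPathFrom G p q π → IsPathFrom G q r ρ → IsPathFrom G p r (π ++ ρ)
  | [], _, _, _, _, rfl, hρ => hρ
  | _ :: _, _, _, _, _, ⟨hs, hp, hrest⟩, hρ => ⟨hs, hp, hrest.append hρ⟩

theorem effectQ_nil {m : ℕ} : effectQ ([] : List (Fin m × (Fin d → ℤ) × Fin m)) = 0 := by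
  funext i
  simp [effectQ, effect]

theorem effectQ_append {m : ℕ} (π ρ : List (Fin m × (Fin d → ℤ) × Fin m)) :
    effectQ (π ++ ρ) = effectQ π + effectQ ρ := by
  funext i
  simp [effectQ, effect]

theorem cycThrough_le_cyc (G : VASS d) (t : G.Trans) : G.CycThrough t ≤ G.Cyc :=
  Submodule.span_mono fun _ ⟨q, π, hπ, _, hv⟩ => ⟨q, π, hπ, hv⟩

theorem effectQ_mem_cycThrough {t : G.Trans} (ht : t ∈ G.T) {q : Fin G.n}
    {π ρ σ : List G.Trans} (hρ : IsPathFrom G t.2.2 q ρ) (hπ : IsPathFrom G q q π)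
    (hσ : IsPathFrom G q t.1 σ) : effectQ π ∈ G.CycThrough t := by
  have htρ : IsPathFrom G t.1 q (t :: ρ) := ⟨ht, rfl, hρ⟩
  have mem_cycThrough : ∀ {τ : List G.Trans}, IsPathFrom G q q τ →
      effectQ ((t :: ρ) ++ τ ++ σ) ∈ G.CycThrough t := fun hτ =>
    Submodule.subset_span ⟨t.1, _, (htρ.append hτ).append hσ,
      List.mem_append_left _ (List.mem_append_left _ List.mem_cons_self), rfl⟩
  have splice : effectQ π = effectQ ((t :: ρ) ++ π ++ σ) - effectQ ((t :: ρ) ++ [] ++ σ) := by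
    simp only [effectQ_append, effectQ_nil]
    abel
  rw [splice]
  exact Submodule.sub_mem _ (mem_cycThrough hπ) (mem_cycThrough rfl)

end VASS

/-- In a strongly connected VASS, the span of effects of cycles through any
fixed transition equals the span of effects of all cycles. -/
theorem stmt11 {d : ℕ} (G : VASS d) (hsc : G.StronglyConnected)
    (t : G.Trans) (ht : t ∈ G.T) :
    G.CycThrough t = G.Cyc := by
  refine le_antisymm (cycThrough_le_cyc G t) ?_
  rw [Cyc, Submodule.span_le]
  rintro _ ⟨q, π, hπ, rfl⟩
  obtain ⟨ρ, hρ⟩ := hsc t.2.2 q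
  obtain ⟨σ, hσ⟩ := hsc q t.1
  exact effectQ_mem_cycThrough ht hρ hπ hσ
end

section
/- Let G be a d-VASS and Λ = α₀β₁⁺α₁⋯βₖ⁺αₖ a positive linear path scheme from state p to q compatible to G. For all u, v ∈ ℕ^d and e ∈ ℕ^k with e(i) ≥ 1 for all i: if the triple (u, e, v) satisfies the characteristic system E_LPS(Λ), then p(u) →^{α₀β₁^{e(1)}α₁⋯βₖ^{e(k)}αₖ} q(v) under ℕ^d-semantics, i.e., the run from u along the path α₀β₁^{e(1)}⋯αₖ stays componentwise nonnegative and ends at v. -/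
/-!
The run along `α₀ β₁^{e₁} α₁ ⋯ β_k^{e_k} α_k` is split into its blocks, and nonnegativity is
checked block by block, each block starting where the previous one ended. Inside the `ℓ`-th copy of
a cycle `β` the counters are those at the same position of the first copy shifted by `ℓ • Δ(β)`;
coordinatewise this is monotone in `ℓ`, so it lies between its values for the first and the last
copy, which are exactly the two families of inequalities of condition (3).
-/

/-- The effect of a word of vectors in `ℤ^d`: the componentwise sum. -/
def eff {d : ℕ} (L : List (Fin d → ℤ)) : Fin d → ℤ := L.sum

/-- The action word `α₀ β₁^{e₁} α₁ ⋯ β_k^{e_k} α_k` of a linear path scheme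
with paths `α i` (for `i : Fin (k+1)`), cycles `β i` (for `i : Fin k`, `β i`
being the cycle between `α i` and `α (i+1)`), and exponents `e`. -/
def lpsWord {d k : ℕ} (α : Fin (k + 1) → List (Fin d → ℤ))
    (β : Fin k → List (Fin d → ℤ)) (e : Fin k → ℕ) : List (Fin d → ℤ) :=
  α 0 ++ (List.ofFn fun i : Fin k =>
    (List.replicate (e i) (β i)).flatten ++ α i.succ).flatten

/-- The effect of the part of the scheme word strictly before `α i`,
i.e. of `α₀ β₁^{e₁} α₁ ⋯ α_{i-1} β_i^{e_i}`. -/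
def prefEff {d k : ℕ} (α : Fin (k + 1) → List (Fin d → ℤ))
    (β : Fin k → List (Fin d → ℤ)) (e : Fin k → ℕ) (i : Fin (k + 1)) : Fin d → ℤ :=
  ∑ j : Fin k, if (j : ℕ) < (i : ℕ) then eff (α j.castSucc) + (e j) • eff (β j) else 0

/-- `NReach u W v`: the word `W`, fired from the nonnegative vector `u`, keeps
all intermediate vectors componentwise nonnegative and ends at `v`
(`ℕ^d`-semantics of a run along `W`). -/
def NReach {d : ℕ} (u : Fin d → ℤ) (W : List (Fin d → ℤ)) (v : Fin d → ℤ) : Prop :=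
  (∀ m, ∀ x, 0 ≤ u x + eff (W.take m) x) ∧ (∀ x, u x + eff W x = v x)

theorem nonneg_add_nsmul_of_le {M : Type*} [AddCommGroup M] [LinearOrder M]
    [IsOrderedAddMonoid M] {a b : M} {l n : ℕ} (hl : l ≤ n) (h₀ : 0 ≤ a) (hn : 0 ≤ a + n • b) :
    0 ≤ a + l • b := by
  rcases le_total 0 b with hb | hb
  · exact add_nonneg h₀ (nsmul_nonneg hb l)
  · exact hn.trans (add_le_add_right (nsmul_le_nsmul_left_of_nonpos hb hl) a)

section NReach

variable {d : ℕ} {u v w : Fin d → ℤ} {A B W : List (Fin d → ℤ)}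

@[simp]
theorem eff_nil : eff ([] : List (Fin d → ℤ)) = 0 := List.sum_nil

theorem eff_append (A B : List (Fin d → ℤ)) : eff (A ++ B) = eff A + eff B := List.sum_append

theorem nreach_iff : NReach u W v ↔ (∀ m, 0 ≤ u + eff (W.take m)) ∧ u + eff W = v := by
  simp only [NReach, Pi.le_def, funext_iff, Pi.add_apply, Pi.zero_apply]

theorem NReach.nonneg_end (h : NReach u W v) : 0 ≤ v := by
  obtain ⟨hpre, rfl⟩ := nreach_iff.mp h
  simpa using hpre W.length

theorem NReach.nil (hu : 0 ≤ u) : NReach u [] u :=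
  nreach_iff.mpr ⟨fun m => by simpa using hu, by simp⟩

theorem NReach.of_take_nonneg (hu : 0 ≤ u)
    (hW : ∀ j, 1 ≤ j → j ≤ W.length → 0 ≤ u + eff (W.take j)) (hv : u + eff W = v) :
    NReach u W v := by
  refine nreach_iff.mpr ⟨fun m => ?_, hv⟩
  rw [List.take_eq_take_min]
  rcases Nat.eq_zero_or_pos (min m W.length) with hm | hm
  · simpa [hm] using hu
  · exact hW _ hm (min_le_right _ _)

theorem NReach.append (hA : NReach u A w) (hB : NReach w B v) : NReach u (A ++ B) v := by
  obtain ⟨hpreA, rfl⟩ := nreach_iff.mp hA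
  obtain ⟨hpreB, rfl⟩ := nreach_iff.mp hB
  refine nreach_iff.mpr ⟨fun m => ?_, by rw [eff_append, add_assoc]⟩
  rcases le_or_gt m A.length with hm | hm
  · rw [List.take_append_of_le_length hm]
    exact hpreA m
  · rw [List.take_append, List.take_of_length_le hm.le, eff_append, ← add_assoc]
    exact hpreB _

theorem NReach.flatten_ofFn {k : ℕ} (f : Fin k → List (Fin d → ℤ)) (c : Fin (k + 1) → Fin d → ℤ)
    (hf : ∀ i, 0 ≤ c i.castSucc → NReach (c i.castSucc) (f i) (c i.succ)) (h₀ : 0 ≤ c 0) :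
    NReach (c 0) (List.ofFn f).flatten (c (Fin.last k)) := by
  induction k with
  | zero => simpa using NReach.nil h₀
  | succ k ih =>
    rw [List.ofFn_succ, List.flatten_cons]
    have hfirst : NReach (c 0) (f 0) (c (Fin.succ 0)) := hf 0 h₀
    exact hfirst.append
      (ih (fun i => f i.succ) (fun i => c i.succ) (fun i => hf i.succ) hfirst.nonneg_end)

theorem NReach.replicate_flatten {β : List (Fin d → ℤ)} {n : ℕ} (hu : 0 ≤ u)
    (hfirst : ∀ j, 1 ≤ j → j ≤ β.length → 0 ≤ u + eff (β.take j))
    (hlast : ∀ j, 1 ≤ j → j ≤ β.length → 0 ≤ u + (n - 1) • eff β + eff (β.take j)) :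
    NReach u (List.replicate n β).flatten (u + n • eff β) := by
  suffices h : ∀ m ≤ n, NReach u (List.replicate m β).flatten (u + m • eff β) from h n le_rfl
  intro m hm
  induction m with
  | zero => simpa using NReach.nil hu
  | succ m ih =>
    rw [List.replicate_succ', List.flatten_append, List.flatten_singleton]
    have hrun := ih (by omega)
    refine hrun.append (.of_take_nonneg hrun.nonneg_end (fun j hj₁ hj₂ x => ?_) ?_)
    · have h₀ := hfirst j hj₁ hj₂ x
      have h₁ := hlast j hj₁ hj₂ x
      simp only [Pi.zero_apply, Pi.add_apply, Pi.smul_apply] at h₀ h₁ ⊢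
      rw [add_right_comm] at h₁ ⊢
      exact nonneg_add_nsmul_of_le (by omega : m ≤ n - 1) h₀ h₁
    · rw [succ_nsmul, add_assoc]

end NReach

section prefEff

variable {d k : ℕ} (α : Fin (k + 1) → List (Fin d → ℤ)) (β : Fin k → List (Fin d → ℤ))
  (e : Fin k → ℕ)

@[simp]
theorem prefEff_zero : prefEff α β e 0 = 0 := by
  simp [prefEff]

theorem prefEff_succ (i : Fin k) :
    prefEff α β e i.succ = prefEff α β e i.castSucc + (eff (α i.castSucc) + e i • eff (β i)) := by
  have hsplit : ∀ j : Fin k,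
      (if (j : ℕ) < i + 1 then eff (α j.castSucc) + e j • eff (β j) else 0) =
        (if (j : ℕ) < i then eff (α j.castSucc) + e j • eff (β j) else 0) +
          if j = i then eff (α j.castSucc) + e j • eff (β j) else 0 := by
    intro j
    split_ifs <;> simp_all [Fin.ext_iff] <;> omega
  simp only [prefEff, Fin.val_succ, Fin.val_castSucc, hsplit, Finset.sum_add_distrib,
    Finset.sum_ite_eq', Finset.mem_univ, if_true]

end prefEff

theorem stmt13_general {d k : ℕ} (α : Fin (k + 1) → List (Fin d → ℤ))
    (β : Fin k → List (Fin d → ℤ)) (e : Fin k → ℕ) (u v : Fin d → ℤ)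
    (hu : ∀ x, 0 ≤ u x)
    -- condition (2): nonnegativity at every prefix of each `α i`
    (h2 : ∀ (i : Fin (k + 1)) (j : ℕ), 1 ≤ j → j ≤ (α i).length →
      ∀ x, 0 ≤ u x + prefEff α β e i x + eff ((α i).take j) x)
    -- condition (3): nonnegativity at every prefix of the first copy of `β i`…
    (h3a : ∀ (i : Fin k) (j : ℕ), 1 ≤ j → j ≤ (β i).length →
      ∀ x, 0 ≤ u x + prefEff α β e i.castSucc x + eff (α i.castSucc) x +
        eff ((β i).take j) x)
    -- …and of the last copy of `β i`
    (h3b : ∀ (i : Fin k) (j : ℕ), 1 ≤ j → j ≤ (β i).length →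
      ∀ x, 0 ≤ u x + prefEff α β e i.castSucc x + eff (α i.castSucc) x +
        (e i - 1) • eff (β i) x + eff ((β i).take j) x)
    -- condition (4): total effect
    (h4 : ∀ x, u x + eff (lpsWord α β e) x = v x) :
    NReach u (lpsWord α β e) v := by
  set c : Fin (k + 1) → Fin d → ℤ := fun i => u + prefEff α β e i + eff (α i)
  have hα : ∀ i, 0 ≤ u + prefEff α β e i → NReach (u + prefEff α β e i) (α i) (c i) :=
    fun i h => .of_take_nonneg h (h2 i) rfl
  have hβ : ∀ i : Fin k, 0 ≤ c i.castSucc →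
      NReach (c i.castSucc) (List.replicate (e i) (β i)).flatten (u + prefEff α β e i.succ) := by
    intro i h
    rw [prefEff_succ, ← add_assoc, ← add_assoc]
    exact .replicate_flatten h (h3a i) (h3b i)
  have hblock : ∀ i : Fin k, 0 ≤ c i.castSucc → NReach (c i.castSucc)
      ((List.replicate (e i) (β i)).flatten ++ α i.succ) (c i.succ) := fun i h =>
    (hβ i h).append (hα i.succ (hβ i h).nonneg_end)
  have hstart : NReach u (α 0) (c 0) := by
    simpa using hα 0 (by rw [prefEff_zero, add_zero]; exact hu)
  exact ⟨(hstart.append (.flatten_ofFn _ c hblock hstart.nonneg_end)).1, h4⟩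

/-- If `(u, e, v)` satisfies the characteristic system `E_LPS(Λ)` of the
positive linear path scheme `Λ = α₀β₁⁺α₁⋯βₖ⁺αₖ`, then the run from `u` along
`α₀β₁^{e(1)}⋯βₖ^{e(k)}αₖ` stays componentwise nonnegative and ends at `v`. -/
theorem stmt13 {d k : ℕ} (α : Fin (k + 1) → List (Fin d → ℤ))
    (β : Fin k → List (Fin d → ℤ)) (e : Fin k → ℕ) (u v : Fin d → ℤ)
    (hu : ∀ x, 0 ≤ u x) (hv : ∀ x, 0 ≤ v x)
    -- condition (1): each cycle is taken at least once
    (he : ∀ i, 1 ≤ e i)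
    -- condition (2): nonnegativity at every prefix of each `α i`
    (h2 : ∀ (i : Fin (k + 1)) (j : ℕ), 1 ≤ j → j ≤ (α i).length →
      ∀ x, 0 ≤ u x + prefEff α β e i x + eff ((α i).take j) x)
    -- condition (3): nonnegativity at every prefix of the first copy of `β i`…
    (h3a : ∀ (i : Fin k) (j : ℕ), 1 ≤ j → j ≤ (β i).length →
      ∀ x, 0 ≤ u x + prefEff α β e i.castSucc x + eff (α i.castSucc) x +
        eff ((β i).take j) x)
    -- …and of the last copy of `β i`
    (h3b : ∀ (i : Fin k) (j : ℕ), 1 ≤ j → j ≤ (β i).length →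
      ∀ x, 0 ≤ u x + prefEff α β e i.castSucc x + eff (α i.castSucc) x +
        (e i - 1) • eff (β i) x + eff ((β i).take j) x)
    -- condition (4): total effect
    (h4 : ∀ x, u x + eff (lpsWord α β e) x = v x) :
    NReach u (lpsWord α β e) v :=
  stmt13_general α β e u v hu h2 h3a h3b h4
end

section
/- Let σ = α₀β₁*α₁⋯βₖ*αₖ be a zigzag-free linear path scheme in ℤ², let q(u) →^σ q(v) via exponents e₁, …, eₖ (so v − u = Δ(α₀⋯αₖ) + Σᵢ eᵢ·Δ(βᵢ)), and let Z be an orthant of ℚ² containing v − u. Then for every index j with Δ(βⱼ) ∉ Z, the exponent satisfies eⱼ ≤ L·N, where L = |σ| is the total length and N bounds the norm of all transition effects. -/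
/-! Pick a coordinate `ℓ` where `Δ(βⱼ)` leaves `Z`, and orient it by the sign `c` of the common
orthant of the cycles. In direction `c` every cycle effect is `≥ 0` and `Δ(βⱼ)` is `≥ 1`, while `v - u`
is `≤ 0` there because `Z` and the cycle orthant disagree at `ℓ`. Hence
`eⱼ ≤ Σᵢ eᵢ Δ(βᵢ)(ℓ) c = (v - u)(ℓ) c - Δ(α₀⋯αₖ)(ℓ) c ≤ |Δ(α₀⋯αₖ)(ℓ)| ≤ L N`. -/

open Finset

lemma eff_lpsWord {d k : ℕ} (α : Fin (k + 1) → List (Fin d → ℤ))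
    (β : Fin k → List (Fin d → ℤ)) (e : Fin k → ℕ) :
    eff (lpsWord α β e) = ∑ i, eff (α i) + ∑ i, e i • eff (β i) := by
  simp only [lpsWord, eff, List.sum_append, List.sum_flatten, List.map_ofFn, List.sum_ofFn,
    Function.comp_apply, List.map_replicate, List.sum_replicate, Fin.sum_univ_succ,
    sum_add_distrib]
  abel

lemma abs_eff_apply_le {d : ℕ} {N : ℕ} {W : List (Fin d → ℤ)}
    (hW : ∀ w ∈ W, ∀ x, (w x).natAbs ≤ N) (x : Fin d) :
    |eff W x| ≤ W.length * N := by
  induction W with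
  | nil => simp [eff]
  | cons w W ih =>
    have hw : |w x| ≤ N := by
      rw [Int.abs_eq_natAbs]; exact_mod_cast hW w List.mem_cons_self x
    have hrest := ih fun w' hw' => hW w' (List.mem_cons_of_mem _ hw')
    calc |eff (w :: W) x| = |w x + eff W x| := by simp [eff]
      _ ≤ |w x| + |eff W x| := abs_add_le _ _
      _ ≤ (w :: W).length * N := by push_cast [List.length_cons]; linarith

lemma abs_sum_eff_apply_le {ι : Type*} [Fintype ι] {d N : ℕ} {α : ι → List (Fin d → ℤ)}
    (hα : ∀ i, ∀ w ∈ α i, ∀ x, (w x).natAbs ≤ N) (x : Fin d) :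
    |∑ i, eff (α i) x| ≤ (∑ i, (α i).length : ℕ) * N := by
  push_cast
  rw [sum_mul]
  exact (abs_sum_le_sum_abs _ _).trans (sum_le_sum fun i _ => abs_eff_apply_le (hα i) x)

lemma natCast_le_sum_mul_of_pos {ι : Type*} {s : Finset ι} {e : ι → ℕ} {b : ι → ℤ}
    (hb : ∀ i ∈ s, 0 ≤ b i) {j : ι} (hj : j ∈ s) (hbj : 0 < b j) :
    (e j : ℤ) ≤ ∑ i ∈ s, e i * b i :=
  calc (e j : ℤ) ≤ e j * b j := le_mul_of_one_le_right (Int.natCast_nonneg _) hbj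
    _ ≤ ∑ i ∈ s, e i * b i :=
      single_le_sum (f := fun i => (e i : ℤ) * b i)
        (fun i hi => mul_nonneg (Int.natCast_nonneg _) (hb i hi)) hj

lemma mul_nonpos_of_mul_neg_of_mul_pos {R : Type*} [CommRing R] [LinearOrder R]
    [IsStrictOrderedRing R]
    {a b s t : R} (ha : 0 ≤ a * s) (hb : b * s < 0) (hbt : 0 < b * t) : a * t ≤ 0 := by
  nlinarith [mul_self_nonneg s, mul_self_nonneg b]

theorem stmt16_general {k : ℕ} (α : Fin (k + 1) → List (Fin 2 → ℤ))
    (β : Fin k → List (Fin 2 → ℤ)) (e : Fin k → ℕ) (u v : Fin 2 → ℤ)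
    (N L : ℕ)
    (hL : L = (∑ i, (α i).length) + ∑ i, (β i).length)
    (hNα : ∀ i, ∀ w ∈ α i, ∀ x, (w x).natAbs ≤ N)
    -- zigzag-freeness: all cycle effects lie in a common orthant
    (tc : Fin 2 → ℤ) (htc : ∀ x, tc x = 1 ∨ tc x = -1)
    (hzz : ∀ i x, 0 ≤ eff (β i) x * tc x)
    -- the orthant `Z` containing `v - u`
    (t : Fin 2 → ℤ)
    (hZ : ∀ x, 0 ≤ (v x - u x) * t x)
    (hrun : NReach u (lpsWord α β e) v) :
    ∀ j : Fin k, ¬ (∀ x, 0 ≤ eff (β j) x * t x) → e j ≤ L * N := by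
  intro j hj
  obtain ⟨ℓ, hℓ⟩ := not_forall.mp hj
  rw [not_le] at hℓ
  have hc : |tc ℓ| = 1 := by rcases htc ℓ with h | h <;> simp [h]
  have hβj : 0 < eff (β j) ℓ * tc ℓ :=
    (hzz j ℓ).lt_of_ne' (mul_ne_zero (left_ne_zero_of_mul hℓ.ne)
      (abs_ne_zero.mp (hc.symm ▸ one_ne_zero)))
  have hvu : v ℓ - u ℓ = ∑ i, eff (α i) ℓ + ∑ i, e i * eff (β i) ℓ := by
    have := hrun.2 ℓ
    simp only [eff_lpsWord, Pi.add_apply, Finset.sum_apply, nsmul_eq_mul, Pi.mul_apply,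
      Pi.natCast_apply] at this
    linarith
  suffices (e j : ℤ) ≤ L * N by exact_mod_cast this
  calc (e j : ℤ) ≤ ∑ i, e i * (eff (β i) ℓ * tc ℓ) :=
        natCast_le_sum_mul_of_pos (fun i _ => hzz i ℓ) (mem_univ j) hβj
    _ = (v ℓ - u ℓ) * tc ℓ - (∑ i, eff (α i) ℓ) * tc ℓ := by
        rw [hvu, add_mul, sum_mul (s := univ) (f := fun i => (e i : ℤ) * eff (β i) ℓ)]
        simp only [mul_assoc, add_sub_cancel_left]
    _ ≤ -((∑ i, eff (α i) ℓ) * tc ℓ) := by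
        linarith [mul_nonpos_of_mul_neg_of_mul_pos (hZ ℓ) hℓ hβj]
    _ ≤ |∑ i, eff (α i) ℓ| := by
        simpa [abs_mul, hc] using neg_le_abs ((∑ i, eff (α i) ℓ) * tc ℓ)
    _ ≤ (∑ i, (α i).length : ℕ) * N := abs_sum_eff_apply_le hNα ℓ
    _ ≤ L * N := by gcongr; omega

/-- For a zigzag-free linear path scheme `σ` in dimension 2 realizing a run
`q(u) →^σ q(v)` with exponents `e`, and an orthant `Z` (sign vector `t`)
containing `v − u`, every cycle whose effect is not in `Z` has its exponent
bounded by `L·N`, where `L = |σ|` and `N` bounds the norms of all effects. -/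
theorem stmt16 {k : ℕ} (α : Fin (k + 1) → List (Fin 2 → ℤ))
    (β : Fin k → List (Fin 2 → ℤ)) (e : Fin k → ℕ) (u v : Fin 2 → ℤ)
    (hu : ∀ x, 0 ≤ u x) (hv : ∀ x, 0 ≤ v x)
    (N L : ℕ)
    (hL : L = (∑ i, (α i).length) + ∑ i, (β i).length)
    (hNα : ∀ i, ∀ w ∈ α i, ∀ x, (w x).natAbs ≤ N)
    (hNβ : ∀ i, ∀ w ∈ β i, ∀ x, (w x).natAbs ≤ N)
    -- zigzag-freeness: all cycle effects lie in a common orthant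
    (tc : Fin 2 → ℤ) (htc : ∀ x, tc x = 1 ∨ tc x = -1)
    (hzz : ∀ i x, 0 ≤ eff (β i) x * tc x)
    -- the orthant `Z` containing `v - u`
    (t : Fin 2 → ℤ) (ht : ∀ x, t x = 1 ∨ t x = -1)
    (hZ : ∀ x, 0 ≤ (v x - u x) * t x)
    (hrun : NReach u (lpsWord α β e) v) :
    ∀ j : Fin k, ¬ (∀ x, 0 ≤ eff (β j) x * t x) → e j ≤ L * N :=
  stmt16_general α β e u v N L hL hNα tc htc hzz t hZ hrun
end

section
/- Let G = (Q, T) be a d-VASS in which some coordinate i ∈ [d] satisfies i ∉ supp(Cyc(G)) (every cycle of G has zero effect in coordinate i). Then for every run p(u) →* r(w) under ℕ^d-semantics, |w(i) − u(i)| ≤ |Q|·N, where N is the maximum absolute value of the i-th component of any transition effect. -/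
open VASS

/-- Reachability between configurations under `ℕ^d`-semantics: each step adds
the effect of a transition and all intermediate vectors stay in `ℕ^d`. -/
inductive Reaches {d : ℕ} (G : VASS d) :
    Fin G.n → (Fin d → ℕ) → Fin G.n → (Fin d → ℕ) → Prop
  | refl (p : Fin G.n) (u : Fin d → ℕ) : Reaches G p u p u
  | step (p : Fin G.n) (u : Fin d → ℕ) (a : Fin d → ℤ) (q : Fin G.n)
      (v : Fin d → ℕ) (r : Fin G.n) (w : Fin d → ℕ) :
      (p, a, q) ∈ G.T → (∀ x, (v x : ℤ) = (u x : ℤ) + a x) →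
      Reaches G q v r w → Reaches G p u r w


/-!
A run is a path of `G` whose effect is `w - u`. While a path visits some state twice it splits
into a strictly shorter path with the same endpoints plus a cycle, and the cycle contributes
nothing to coordinate `i`. Hence the `i`-th effect of the run equals that of a path visiting
pairwise distinct states, which has fewer than `|Q|` transitions, each changing coordinate `i`
by at most `N`.
-/

namespace VASS

variable {d : ℕ} {G : VASS d}

lemma effect_nil {m : ℕ} : effect ([] : List (Fin m × (Fin d → ℤ) × Fin m)) = 0 := rfl

lemma effect_cons {m : ℕ} (t : Fin m × (Fin d → ℤ) × Fin m)
    (π : List (Fin m × (Fin d → ℤ) × Fin m)) :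
    effect (t :: π) = t.2.1 + effect π := by
  simp [effect]

lemma effect_append {m : ℕ} (π ρ : List (Fin m × (Fin d → ℤ) × Fin m)) :
    effect (π ++ ρ) = effect π + effect ρ := by
  simp [effect]

namespace IsPathFrom

variable {p q r : Fin G.n} {π ρ : List G.Trans}

lemma append_s19 (hπ : IsPathFrom G p q π) (hρ : IsPathFrom G q r ρ) :
    IsPathFrom G p r (π ++ ρ) := by
  induction π generalizing p with
  | nil => cases hπ; exact hρ
  | cons t π ih => exact ⟨hπ.1, hπ.2.1, ih hπ.2.2⟩

lemma of_append (h : IsPathFrom G p r (π ++ ρ)) :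
    ∃ q, IsPathFrom G p q π ∧ IsPathFrom G q r ρ := by
  induction π generalizing p with
  | nil => exact ⟨p, rfl, h⟩
  | cons t π ih =>
    obtain ⟨q, hπ, hρ⟩ := ih h.2.2
    exact ⟨q, ⟨h.1, h.2.1, hπ⟩, hρ⟩

/-- `p :: π.map (·.2.2)` is the sequence of states visited by the path `π` from `p`. -/
lemma exists_cycle_of_not_nodup (h : IsPathFrom G p r π)
    (hdup : ¬ (p :: π.map (·.2.2)).Nodup) :
    ∃ ρ, IsPathFrom G p r ρ ∧ ρ.length < π.length ∧
      ∃ q c, IsPathFrom G q q c ∧ effect π = effect ρ + effect c := by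
  induction π generalizing p with
  | nil => simp at hdup
  | cons t π ih =>
    rw [List.nodup_cons, not_and_or, not_not] at hdup
    rcases hdup with hp | hdup
    · obtain ⟨s, hs, hsp⟩ := List.mem_map.mp hp
      obtain ⟨σ, τ, hsplit⟩ := List.append_of_mem hs
      rw [hsplit] at h
      obtain ⟨q, hσ, hs, hsq, hτ⟩ := h.of_append
      refine ⟨τ, hsp ▸ hτ, by simp [hsplit]; omega, p, σ ++ [s],
        hσ.append_s19 ⟨hs, hsq, hsp⟩, ?_⟩
      rw [hsplit, effect_append, effect_append, effect_cons, effect_cons, effect_nil]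
      abel
    · rw [List.map_cons] at hdup
      obtain ⟨ρ, hρ, hlen, q, c, hc, heff⟩ := ih h.2.2 hdup
      exact ⟨t :: ρ, ⟨h.1, h.2.1, hρ⟩, by simpa using hlen, q, c, hc,
        by rw [effect_cons, effect_cons, heff, add_assoc]⟩

theorem exists_short_of_cycle_effect_eq_zero {i : Fin d}
    (hcycle : ∀ q c, IsPathFrom G q q c → effect c i = 0) {p r : Fin G.n} {π : List G.Trans}
    (h : IsPathFrom G p r π) :
    ∃ ρ, IsPathFrom G p r ρ ∧ ρ.length < G.n ∧ effect ρ i = effect π i := by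
  by_cases hnodup : (p :: π.map (·.2.2)).Nodup
  · refine ⟨π, h, ?_, rfl⟩
    simpa using hnodup.length_le_card
  · obtain ⟨ρ, hρ, hlen, q, c, hc, heff⟩ := h.exists_cycle_of_not_nodup hnodup
    obtain ⟨ρ', hρ', hlen', heff'⟩ := exists_short_of_cycle_effect_eq_zero hcycle hρ
    exact ⟨ρ', hρ', hlen', by rw [heff', heff, Pi.add_apply, hcycle q c hc, add_zero]⟩
termination_by π.length

lemma abs_effect_apply_le {i : Fin d} {N : ℕ} (hN : ∀ t ∈ G.T, (t.2.1 i).natAbs ≤ N)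
    (h : IsPathFrom G p r π) : |effect π i| ≤ π.length * N := by
  induction π generalizing p with
  | nil => simp [effect_nil]
  | cons t π ih =>
    have ht : |t.2.1 i| ≤ N := by
      rw [Int.abs_eq_natAbs]; exact_mod_cast hN t h.1
    calc |effect (t :: π) i| = |t.2.1 i + effect π i| := by rw [effect_cons, Pi.add_apply]
      _ ≤ |t.2.1 i| + |effect π i| := abs_add_le _ _
      _ ≤ N + π.length * N := add_le_add ht (ih h.2.2)
      _ = (t :: π).length * N := by push_cast [List.length_cons]; ring

end IsPathFrom

lemma effect_apply_eq_zero_of_cycle {i : Fin d} (hcyc : ∀ v ∈ G.Cyc, v i = 0) {q : Fin G.n}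
    {c : List G.Trans} (hc : IsPathFrom G q q c) : effect c i = 0 :=
  Int.cast_eq_zero.mp (hcyc _ (Submodule.subset_span ⟨q, c, hc, rfl⟩))

end VASS

lemma Reaches.exists_isPathFrom {d : ℕ} {G : VASS d} {p r : Fin G.n} {u w : Fin d → ℕ}
    (h : Reaches G p u r w) :
    ∃ π, IsPathFrom G p r π ∧ ∀ x, (w x : ℤ) = u x + effect π x := by
  induction h with
  | refl p u => exact ⟨[], rfl, by simp [effect_nil]⟩
  | step p u a q v r w ht hv _ ih =>
    obtain ⟨π, hπ, heff⟩ := ih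
    refine ⟨(p, a, q) :: π, ⟨ht, rfl, hπ⟩, fun x => ?_⟩
    rw [effect_cons, Pi.add_apply, heff x, hv x, add_assoc]

/-- If coordinate `i` is outside the support of `Cyc(G)`, then along any run of
`G` the `i`-th coordinate changes by at most `|Q|·N`, where `N` bounds the
absolute value of the `i`-th component of every transition effect. -/
theorem stmt19 {d : ℕ} (G : VASS d) (i : Fin d)
    (hcyc : ∀ v ∈ G.Cyc, v i = 0)
    (N : ℕ) (hN : ∀ t ∈ G.T, (t.2.1 i).natAbs ≤ N)
    (p r : Fin G.n) (u w : Fin d → ℕ) (h : Reaches G p u r w) :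
    |(w i : ℤ) - (u i : ℤ)| ≤ (G.n : ℤ) * N := by
  obtain ⟨π, hπ, heff⟩ := h.exists_isPathFrom
  obtain ⟨ρ, hρ, hlen, hρπ⟩ :=
    hπ.exists_short_of_cycle_effect_eq_zero fun _ _ => effect_apply_eq_zero_of_cycle hcyc
  calc |(w i : ℤ) - u i| = |effect ρ i| := by rw [hρπ, heff i, add_sub_cancel_left]
    _ ≤ ρ.length * N := hρ.abs_effect_apply_le hN
    _ ≤ G.n * N := by gcongr
end
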